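/- arXiv:1601.04824 — 4 statements merged into one kernel-verified Lean document; each statement's English description precedes it below -/
import Mathlib

section
/- Let (N, Δ, 𝒯, ≤_𝒯, rt, R) be an RSP and let κ = min{𝔱(𝒯), 𝔭(𝒯)}. Then N is (κ,1,Δ)-saturated: every set p(x) of fewer than κ formulas of the form φ(x,ā), with φ(x,ȳ) ∈ Δ and parameters ā from N, which is finitely satisfiable in N, is realized by a single element of N. -/
open FirstOrder Cardinal

namespace Shelah1064

/-! ### Saturation for sets of formulas -/

/-- An instance of a formula `φ(x̄,ȳ)` (with `ȳ` of some finite length `m`) with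
parameters from `N`. -/
abbrev FmlInst (L : Language) (ε : ℕ) (N : Type*) :=
  Σ m : ℕ, L.Formula (Fin ε ⊕ Fin m) × (Fin m → N)

/-- Realization of an instance `φ(x̄, b̄)` at the tuple `x̄`. -/
def RealizesInst {L : Language} {N : Type*} [L.Structure N] {ε : ℕ} (x : Fin ε → N)
    (q : FmlInst L ε N) : Prop :=
  q.2.1.Realize (Sum.elim x q.2.2)

/-- `N` is `(κ, ε, Δ)`-saturated: every set of fewer than `κ` instances of formulas from `Δ`
(in a fixed `ε`-tuple of free variables `x̄`, with parameters from `N`) which is finitely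
satisfiable in `N` is realized in `N`. -/
def TupSaturated {L : Language} (κ : Cardinal) (ε : ℕ)
    (Δ : Set (Σ m : ℕ, L.Formula (Fin ε ⊕ Fin m))) (N : Type*) [L.Structure N] : Prop :=
  ∀ p : Set (FmlInst L ε N),
    (∀ q ∈ p, (⟨q.1, q.2.1⟩ : Σ m : ℕ, L.Formula (Fin ε ⊕ Fin m)) ∈ Δ) →
    #p < κ →
    (∀ s ⊆ p, s.Finite → ∃ x : Fin ε → N, ∀ q ∈ s, RealizesInst x q) →
    ∃ x : Fin ε → N, ∀ q ∈ p, RealizesInst x q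

/-- `(κ, atomically)`-saturated: `(κ,1,Δ)`-saturated where `Δ` is the set of atomic formulas
`φ(x,ȳ)`. -/
def AtomSaturated {L : Language} (κ : Cardinal) (N : Type*) [L.Structure N] : Prop :=
  TupSaturated κ 1 {q : Σ m : ℕ, L.Formula (Fin 1 ⊕ Fin m) | q.2.IsAtomic} N

/-- A (finite) conjunction of atomic formulas. -/
inductive IsConjAtomic {L : Language} {α : Type*} : ∀ {n : ℕ}, L.BoundedFormula α n → Prop
  | of_isAtomic {n} {φ : L.BoundedFormula α n} : φ.IsAtomic → IsConjAtomic φ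
  | inf {n} {φ ψ : L.BoundedFormula α n} :
      IsConjAtomic φ → IsConjAtomic ψ → IsConjAtomic (φ ⊓ ψ)

/-! ### Pre-cuts and the cardinals 𝔱, 𝔭 of a set with a transitive reflexive relation -/

/-- The cofinality of a subset `C` w.r.t. the relation `le`: the least cardinality of a
subset of `C` cofinal in `C`. -/
noncomputable def cofin {T : Type*} (le : T → T → Prop) (C : Set T) : Cardinal :=
  sInf { κ | ∃ S : Set T, S ⊆ C ∧ (∀ a ∈ C, ∃ b ∈ S, le a b) ∧ #S = κ }

/-- `(C₁, C₂)` is a `(κ₁,κ₂)`-pre-cut for the relation `le`. -/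
def IsPreCut {T : Type*} (le : T → T → Prop) (C₁ C₂ : Set T) (κ₁ κ₂ : Cardinal) : Prop :=
  (∀ a ∈ C₁ ∪ C₂, ∀ b ∈ C₁ ∪ C₂, le a b ∨ le b a) ∧
  (∀ a ∈ C₁, ∀ b ∈ C₂, le a b) ∧
  (¬ ∃ c : T, (∀ a ∈ C₁, le a c) ∧ (∀ b ∈ C₂, le c b)) ∧
  cofin le C₁ = κ₁ ∧ cofin (fun a b => le b a) C₂ = κ₂

def HasPreCut {T : Type*} (le : T → T → Prop) (κ₁ κ₂ : Cardinal) : Prop :=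
  ∃ C₁ C₂ : Set T, IsPreCut le C₁ C₂ κ₁ κ₂

/-- `𝔭(𝒯)`: the least `κ₁ + κ₂` over all `(κ₁,κ₂)`-pre-cuts with `κ₁, κ₂` infinite regular. -/
noncomputable def pCard {T : Type*} (le : T → T → Prop) : Cardinal :=
  sInf { κ | ∃ κ₁ κ₂ : Cardinal, κ₁.IsRegular ∧ κ₂.IsRegular ∧
    HasPreCut le κ₁ κ₂ ∧ κ = κ₁ + κ₂ }

/-- `𝔱(𝒯)`: the least infinite `κ` such that some strictly `le`-increasing `κ`-sequence
has no upper bound. -/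
noncomputable def tCard {T : Type*} (le : T → T → Prop) : Cardinal :=
  sInf { κ | ℵ₀ ≤ κ ∧ ∃ f : κ.ord.ToType → T,
    (∀ i j, i < j → le (f i) (f j) ∧ ¬ le (f j) (f i)) ∧ ¬ ∃ ub, ∀ i, le (f i) ub }

/-! ### RSP: realization spectrum problems -/

/-- Realization of `φ(x,ȳ)` at `b` (for the distinguished variable `x`) and `a` (for `ȳ`). -/
def Realize1 {L : Language} {N : Type*} [L.Structure N] {m : ℕ}
    (φ : L.Formula (Fin 1 ⊕ Fin m)) (b : N) (a : Fin m → N) : Prop :=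
  φ.Realize (Sum.elim (fun _ => b) a)

/-- The conjunction `φ₁(x,ȳ₁) ∧ φ₂(x,ȳ₂)` (with the parameter variables placed side by
side). -/
def pConj {L : Language} {m₁ m₂ : ℕ} (φ₁ : L.Formula (Fin 1 ⊕ Fin m₁))
    (φ₂ : L.Formula (Fin 1 ⊕ Fin m₂)) : L.Formula (Fin 1 ⊕ Fin (m₁ + m₂)) :=
  (φ₁.relabel (Sum.map id (Fin.castAdd m₂))) ⊓ (φ₂.relabel (Sum.map id (Fin.natAdd m₁)))

/-- `(N, Δ, 𝒯, ≤_𝒯, rt, R)` is an RSP (realization spectrum problem). -/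
structure IsRSP {L : Language} (N : Type*) [L.Structure N]
    (Δ : Set (Σ m : ℕ, L.Formula (Fin 1 ⊕ Fin m)))
    {T : Type*} (le : T → T → Prop) (rt : T) (R : N → T → Prop) : Prop where
  refl : ∀ t, le t t
  trans : ∀ s t u, le s t → le t u → le s u
  root_le : ∀ t, le rt t
  conj_closed : ∀ q₁ ∈ Δ, ∀ q₂ ∈ Δ,
    (⟨q₁.1 + q₂.1, pConj q₁.2 q₂.2⟩ : Σ m : ℕ, L.Formula (Fin 1 ⊕ Fin m)) ∈ Δ
  root_R : ∀ b, R b rt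
  mono : ∀ s t, le s t → ∀ b, R b t → R b s
  r_nonempty : ∀ t, ∃ b, R b t
  clause_i : ∀ s, ∀ q ∈ Δ, ∀ a : Fin q.1 → N,
    (∃ b, R b s ∧ Realize1 q.2 b a) →
    ∃ t, le s t ∧ ∀ b, (R b t ↔ R b s ∧ Realize1 q.2 b a)
  clause_j : ∀ t, ∀ q ∈ Δ, ∀ a : Fin q.1 → N,
    (∃ b, Realize1 q.2 b a) →
    ∃ s, le s t ∧ (∃ b, R b s ∧ Realize1 q.2 b a) ∧
      ∀ s₁, le s₁ t → (∃ b, R b s₁ ∧ Realize1 q.2 b a) → le s₁ s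

/-!
Enumerate `p` as `(qᵢ)_{i < |p|}` and build an increasing chain `(tᵢ)` in `𝒯` such that every
element of `R_{tᵢ}` realizes `qᵢ` and every finite subset of `{qⱼ : j ≥ i}` is realized in
`R_{tᵢ}`. At stage `i` one needs an upper bound of the earlier `tⱼ` that is still finitely
good in this sense; clause (i) then cuts it down to `qᵢ`. Such an upper bound exists: otherwise,
by clause (j), every upper bound `c` can be lowered to the largest `x ≤ c` realizing some finite
set not realized at `c`. Iterating produces a descending sequence whose finite sets are pairwise
different, so it gets stuck before `|p|⁺` steps, at a pre-cut with both sides of size `≤ |p|`,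
contradicting `|p| < 𝔭(𝒯)`. Finally `|p| < 𝔱(𝒯)` bounds the whole chain, and any element of
`R` at that bound realizes `p`.
-/

universe u

theorem exists_transfinite_seq {ι α : Type*} [Preorder ι] [WellFoundedLT ι]
    [Nonempty α] (P : ι → Set α → α → Prop)
    (step : ∀ i (g : ι → α), (∀ j < i, P j (g '' Set.Iio j) (g j)) → ∃ a, P i (g '' Set.Iio i) a) :
    ∃ g : ι → α, ∀ i, P i (g '' Set.Iio i) (g i) := by
  let g : ι → α := wellFounded_lt.fix fun i g' ↦
    Classical.epsilon (P i (Set.range fun j : Set.Iio i ↦ g' j j.2))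
  have hg (i : ι) : g i = Classical.epsilon (P i (g '' Set.Iio i)) := by
    rw [Set.image_eq_range]
    exact wellFounded_lt.fix_eq _ i
  refine ⟨g, fun i ↦ ?_⟩
  induction i using WellFoundedLT.induction with
  | _ i ih =>
    rw [hg i]
    exact Classical.epsilon_spec (step i g ih)

section Preorder

variable {T : Type u} [Preorder T] {C : Set T}

theorem cofin_le_mk_of_cofinal {S : Set T} (hSC : S ⊆ C) (hS : ∀ a ∈ C, ∃ b ∈ S, a ≤ b) :
    cofin (· ≤ ·) C ≤ #S :=
  csInf_le' ⟨S, hSC, hS, rfl⟩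

theorem cofin_le_mk (C : Set T) : cofin (· ≤ ·) C ≤ #C :=
  cofin_le_mk_of_cofinal subset_rfl fun a ha ↦ ⟨a, ha, le_rfl⟩

theorem exists_cofinal_mk_eq_cofin (C : Set T) :
    ∃ S, S ⊆ C ∧ (∀ a ∈ C, ∃ b ∈ S, a ≤ b) ∧ #S = cofin (· ≤ ·) C :=
  csInf_mem (s := {κ | ∃ S, S ⊆ C ∧ (∀ a ∈ C, ∃ b ∈ S, a ≤ b) ∧ #S = κ})
    ⟨#C, C, subset_rfl, fun a ha ↦ ⟨a, ha, le_rfl⟩, rfl⟩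

theorem exists_gt_of_mk_lt_cofin (hC : IsChain (· ≤ ·) C) {D : Set T} (hDC : D ⊆ C)
    (hD : #D < cofin (· ≤ ·) C) : ∃ a ∈ C, ∀ b ∈ D, b < a := by
  by_contra! h
  refine hD.not_ge (cofin_le_mk_of_cofinal hDC fun a ha ↦ ?_)
  obtain ⟨b, hb, hba⟩ := h a ha
  exact ⟨b, hb, hC.le_of_not_gt (hDC hb) ha hba⟩

theorem aleph0_le_cofin (hne : C.Nonempty) (hmax : ∀ a ∈ C, ∃ b ∈ C, a < b) :
    ℵ₀ ≤ cofin (· ≤ ·) C := by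
  obtain ⟨S, hSC, hS, hSκ⟩ := exists_cofinal_mk_eq_cofin C
  by_contra! hfin
  rw [← hSκ, lt_aleph0_iff_set_finite] at hfin
  obtain ⟨a, ha⟩ := hne
  obtain ⟨b, hb, -⟩ := hS a ha
  obtain ⟨m, hm⟩ := hfin.exists_maximal ⟨b, hb⟩
  obtain ⟨c, hc, hmc⟩ := hmax m (hSC hm.prop)
  obtain ⟨d, hd, hcd⟩ := hS c hc
  exact hmc.not_ge (hcd.trans (hm.2 hd (hmc.le.trans hcd)))

theorem exists_strictMono_cofinal (hC : IsChain (· ≤ ·) C) (hne : C.Nonempty)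
    (hmax : ∀ a ∈ C, ∃ b ∈ C, a < b) :
    ∃ f : (cofin (· ≤ ·) C).ord.ToType → T, StrictMono f ∧ (∀ i, f i ∈ C) ∧
      ∀ a ∈ C, ∃ i, a ≤ f i := by
  set κ := cofin (· ≤ ·) C
  have hκ : ℵ₀ ≤ κ := aleph0_le_cofin hne hmax
  obtain ⟨S, hSC, hS, hSκ⟩ := exists_cofinal_mk_eq_cofin C
  obtain ⟨e⟩ : Nonempty (κ.ord.ToType ≃ S) := Cardinal.eq.1 (by rw [mk_ord_toType, hSκ])
  have : Nonempty T := hne.to_subtype.map Subtype.val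
  obtain ⟨f, hf⟩ := exists_transfinite_seq
    (fun i A x ↦ x ∈ C ∧ (e i : T) ≤ x ∧ ∀ a ∈ A, a < x) fun i f hf ↦ by
      obtain ⟨a, haC, ha⟩ := exists_gt_of_mk_lt_cofin hC (D := insert (e i : T) (f '' Set.Iio i))
        (Set.insert_subset (hSC (e i).2) (Set.image_subset_iff.2 fun j hj ↦ (hf j hj).1))
        (mk_insert_le.trans_lt (add_lt_of_lt hκ (mk_image_le.trans_lt (by simpa using mk_Iio_lt i))
          (one_lt_aleph0.trans_le hκ)))
      exact ⟨a, haC, (ha _ (Set.mem_insert _ _)).le, fun b hb ↦ ha b (Set.mem_insert_of_mem _ hb)⟩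
  refine ⟨f, fun i j hij ↦ (hf j).2.2 _ ⟨i, hij, rfl⟩, fun i ↦ (hf i).1, fun a ha ↦ ?_⟩
  obtain ⟨b, hb, hab⟩ := hS a ha
  refine ⟨e.symm ⟨b, hb⟩, hab.trans ?_⟩
  simpa using (hf (e.symm ⟨b, hb⟩)).2.1

theorem isRegular_cofin (hC : IsChain (· ≤ ·) C) (hne : C.Nonempty)
    (hmax : ∀ a ∈ C, ∃ b ∈ C, a < b) : (cofin (· ≤ ·) C).IsRegular := by
  obtain ⟨f, hf, hfC, hcof⟩ := exists_strictMono_cofinal hC hne hmax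
  refine ⟨aleph0_le_cofin hne hmax, ?_⟩
  obtain ⟨S, hS, hSmk⟩ := Order.exists_cof_eq (cofin (· ≤ ·) C).ord.ToType
  rw [Ordinal.cof_toType] at hSmk
  rw [← hSmk]
  refine (cofin_le_mk_of_cofinal (Set.image_subset_iff.2 fun i _ ↦ hfC i) fun a ha ↦ ?_).trans
    mk_image_le
  obtain ⟨i, hi⟩ := hcof a ha
  obtain ⟨j, hj, hij⟩ := hS i
  exact ⟨f j, Set.mem_image_of_mem f hj, hi.trans (hf.monotone hij)⟩

theorem bddAbove_of_mk_lt_tCard (hC : IsChain (· ≤ ·) C) (hne : C.Nonempty)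
    (hCt : #C < tCard (T := T) (· ≤ ·)) : BddAbove C := by
  by_contra hunb
  have hmax : ∀ a ∈ C, ∃ b ∈ C, a < b := fun a ha ↦ by
    by_contra! h
    exact hunb ⟨a, fun b hb ↦ hC.le_of_not_gt ha hb (h b hb)⟩
  obtain ⟨f, hf, -, hcof⟩ := exists_strictMono_cofinal hC hne hmax
  have hf_unbdd : ¬ ∃ ub, ∀ i, f i ≤ ub := fun ⟨ub, hub⟩ ↦
    hunb ⟨ub, fun a ha ↦ let ⟨i, hi⟩ := hcof a ha; hi.trans (hub i)⟩
  have htκ : tCard (T := T) (· ≤ ·) ≤ cofin (· ≤ ·) C :=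
    csInf_le' ⟨aleph0_le_cofin hne hmax, f, fun i j hij ↦ lt_iff_le_not_ge.1 (hf hij), hf_unbdd⟩
  exact hCt.not_ge (htκ.trans (cofin_le_mk C))

theorem pCard_le_mk_add_mk {C₁ C₂ : Set T} (h₁ : IsChain (· ≤ ·) C₁) (h₂ : IsChain (· ≤ ·) C₂)
    (hne₁ : C₁.Nonempty) (hne₂ : C₂.Nonempty) (h₁₂ : C₂ ⊆ upperBounds C₁)
    (hgap : ∀ c ∈ upperBounds C₁, c ∉ lowerBounds C₂) : pCard (T := T) (· ≤ ·) ≤ #C₁ + #C₂ := by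
  have hmax : ∀ a ∈ C₁, ∃ b ∈ C₁, a < b := fun a ha ↦ by
    by_contra! h
    exact hgap a (fun b hb ↦ h₁.le_of_not_gt ha hb (h b hb)) fun c hc ↦ h₁₂ hc ha
  have hmin : ∀ a ∈ C₂, ∃ b ∈ C₂, b < a := fun a ha ↦ by
    by_contra! h
    exact hgap a (fun c hc ↦ h₁₂ ha hc) fun b hb ↦ h₂.le_of_not_gt hb ha (h b hb)
  have hcut : IsPreCut (· ≤ ·) C₁ C₂ (cofin (· ≤ ·) C₁) (cofin (fun a b ↦ b ≤ a) C₂) := by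
    refine ⟨?_, fun a ha b hb ↦ h₁₂ hb ha, fun ⟨c, hc₁, hc₂⟩ ↦ hgap c hc₁ hc₂, rfl, rfl⟩
    rintro a (ha | ha) b (hb | hb)
    · exact h₁.total ha hb
    · exact .inl (h₁₂ hb ha)
    · exact .inr (h₁₂ ha hb)
    · exact h₂.total ha hb
  -- the coinitiality of `C₂` is its cofinality in `Tᵒᵈ`
  calc pCard (T := T) (· ≤ ·) ≤ cofin (· ≤ ·) C₁ + cofin (fun a b ↦ b ≤ a) C₂ :=
        csInf_le' ⟨_, _, isRegular_cofin h₁ hne₁ hmax,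
          isRegular_cofin (T := Tᵒᵈ) h₂.symm hne₂ hmin, ⟨C₁, C₂, hcut⟩, rfl⟩
    _ ≤ #C₁ + #C₂ := add_le_add (cofin_le_mk C₁) (cofin_le_mk (T := Tᵒᵈ) C₂)

theorem exists_gap_of_forall_exists_label {Λ : Type u} (hC : BddAbove C) (P : Λ → T → Prop)
    (hP : ∀ l, Antitone (P l))
    (h : ∀ c ∈ upperBounds C, ∃ x ∈ upperBounds C, x ≤ c ∧ ∃ l, P l x ∧ ¬ P l c) :
    ∃ D ⊆ upperBounds C, IsChain (· ≤ ·) D ∧ #D ≤ #Λ ∧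
      ∀ c ∈ upperBounds C, c ∉ lowerBounds D := by
  by_contra! hno
  obtain ⟨c₀, hc₀⟩ := hC
  obtain ⟨-, -, -, l₀, -⟩ := h c₀ hc₀
  have : Nonempty T := ⟨c₀⟩
  have : Nonempty Λ := ⟨l₀⟩
  choose! next hnext hnext_le lab hlab using h
  obtain ⟨c, hc⟩ := exists_transfinite_seq (ι := (Order.succ #Λ).ord.ToType)
    (fun _ A c ↦ c ∈ upperBounds C ∧ c ∈ lowerBounds (next '' A)) fun i c hc ↦ by
      have hanti : ∀ j k, j < k → k < i → next (c k) ≤ next (c j) := fun j k hjk hk ↦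
        (hnext_le _ (hc k hk).1).trans ((hc k hk).2 ⟨c j, ⟨j, hjk, rfl⟩, rfl⟩)
      refine hno _ ?_ ?_ ?_
      · rintro _ ⟨_, ⟨j, hj, rfl⟩, rfl⟩
        exact hnext _ (hc j hj).1
      · rintro _ ⟨_, ⟨j, hj, rfl⟩, rfl⟩ _ ⟨_, ⟨k, hk, rfl⟩, rfl⟩ -
        rcases lt_trichotomy j k with hjk | rfl | hkj
        · exact .inr (hanti j k hjk hk)
        · exact .inl le_rfl
        · exact .inl (hanti k j hkj hj)
      · exact Order.lt_succ_iff.1 (mk_image_le.trans_lt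
          (mk_image_le.trans_lt (by simpa using mk_Iio_lt i)))
  -- for `j < i` we have `c i ≤ next (c j)`, so the label of stage `j` holds at `c i`
  have hinj : Function.Injective fun i ↦ lab (c i) := Function.Injective.of_lt_imp_ne
    fun j i hji heq ↦ (hlab _ (hc i).1).2 (heq ▸ hP _ ((hc i).2 ⟨c j, ⟨j, hji, rfl⟩, rfl⟩)
      (hlab _ (hc j).1).1)
  simpa using mk_le_of_injective hinj

end Preorder

theorem mk_finite_subsets_le {α : Type u} (I : Set α) :
    #{s : Set α // s ⊆ I ∧ s.Finite} ≤ max ℵ₀ #I := by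
  classical
  have hinj : Function.Injective fun s : {s : Set α // s ⊆ I ∧ s.Finite} ↦
      (⟨Subtype.val ⁻¹' s.1, s.2.2.preimage Subtype.val_injective.injOn⟩ :
        {t : Set I // t.Finite}) := by
    intro s t hst
    have := (Subtype.preimage_val_eq_preimage_val_iff I s t).1 (congrArg Subtype.val hst)
    rwa [Set.inter_eq_right.2 s.2.1, Set.inter_eq_right.2 t.2.1, ← Subtype.ext_iff] at this
  calc #{s : Set α // s ⊆ I ∧ s.Finite} ≤ #{t : Set I // t.Finite} := mk_le_of_injective hinj
    _ = #(Finset I) := (mk_congr OrderIso.finsetSetFinite.toEquiv).symm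
    _ ≤ #(List I) := mk_le_of_surjective List.toFinset_surjective
    _ ≤ max ℵ₀ #I := mk_list_le_max I

section Formulas

variable {L : FirstOrder.Language.{u, u}} {N : Type u} [L.Structure N]

def deltaInsts (Δ : Set (Σ m : ℕ, L.Formula (Fin 1 ⊕ Fin m))) : Set (FmlInst L 1 N) :=
  {q | ⟨q.1, q.2.1⟩ ∈ Δ}

def Realizes (b : N) (q : FmlInst L 1 N) : Prop :=
  Realize1 q.2.1 b q.2.2

theorem realize1_pConj {m₁ m₂ : ℕ} (φ₁ : L.Formula (Fin 1 ⊕ Fin m₁))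
    (φ₂ : L.Formula (Fin 1 ⊕ Fin m₂)) (b : N) (a : Fin (m₁ + m₂) → N) :
    Realize1 (pConj φ₁ φ₂) b a ↔
      Realize1 φ₁ b (a ∘ Fin.castAdd m₂) ∧ Realize1 φ₂ b (a ∘ Fin.natAdd m₁) := by
  have h₁ : Sum.elim (fun _ : Fin 1 ↦ b) a ∘ Sum.map id (Fin.castAdd m₂) =
      Sum.elim (fun _ ↦ b) (a ∘ Fin.castAdd m₂) := by
    ext x; cases x <;> rfl
  have h₂ : Sum.elim (fun _ : Fin 1 ↦ b) a ∘ Sum.map id (Fin.natAdd m₁) =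
      Sum.elim (fun _ ↦ b) (a ∘ Fin.natAdd m₁) := by
    ext x; cases x <;> rfl
  rw [Realize1, pConj, Language.Formula.realize_inf, Language.Formula.realize_relabel,
    Language.Formula.realize_relabel, h₁, h₂]
  rfl

def instConj (q₁ q₂ : FmlInst L 1 N) : FmlInst L 1 N :=
  ⟨q₁.1 + q₂.1, pConj q₁.2.1 q₂.2.1, Fin.append q₁.2.2 q₂.2.2⟩

theorem realizes_instConj (q₁ q₂ : FmlInst L 1 N) (b : N) :
    Realizes b (instConj q₁ q₂) ↔ Realizes b q₁ ∧ Realizes b q₂ := by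
  have h₁ : Fin.append q₁.2.2 q₂.2.2 ∘ Fin.castAdd q₂.1 = q₁.2.2 := funext (Fin.append_left _ _)
  have h₂ : Fin.append q₁.2.2 q₂.2.2 ∘ Fin.natAdd q₁.1 = q₂.2.2 := funext (Fin.append_right _ _)
  rw [Realizes, instConj, realize1_pConj, h₁, h₂]
  rfl

theorem exists_realizes_iff_of_finite {Δ : Set (Σ m : ℕ, L.Formula (Fin 1 ⊕ Fin m))}
    (hΔ : ∀ q₁ ∈ Δ, ∀ q₂ ∈ Δ,
      (⟨q₁.1 + q₂.1, pConj q₁.2 q₂.2⟩ : Σ m : ℕ, L.Formula (Fin 1 ⊕ Fin m)) ∈ Δ)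
    {s : Set (FmlInst L 1 N)} (hs : s.Finite) (hne : s.Nonempty) (hsΔ : s ⊆ deltaInsts Δ) :
    ∃ q ∈ deltaInsts Δ, ∀ b : N, Realizes b q ↔ ∀ r ∈ s, Realizes b r := by
  induction s, hs using Set.Finite.induction_on with
  | empty => exact absurd hne Set.not_nonempty_empty
  | @insert a s _ _ ih =>
    rcases s.eq_empty_or_nonempty with rfl | hs
    · exact ⟨a, hsΔ (Set.mem_insert a ∅), by simp⟩
    obtain ⟨q, hqΔ, hq⟩ := ih hs ((Set.subset_insert a s).trans hsΔ)
    exact ⟨instConj a q, hΔ _ (hsΔ (Set.mem_insert a s)) _ hqΔ, fun b ↦ by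
      simp [realizes_instConj, hq]⟩

end Formulas

section RSP

variable {L : FirstOrder.Language.{u, u}} {N : Type u} [L.Structure N]
  {Δ : Set (Σ m : ℕ, L.Formula (Fin 1 ⊕ Fin m))} {T : Type u} {rt : T} {R : N → T → Prop}

def RealizedIn (R : N → T → Prop) (t : T) (s : Set (FmlInst L 1 N)) : Prop :=
  ∃ b, R b t ∧ ∀ q ∈ s, Realizes b q

def FinRealizedIn (R : N → T → Prop) (t : T) (I : Set (FmlInst L 1 N)) : Prop :=
  ∀ s ⊆ I, s.Finite → RealizedIn R t s

variable [Preorder T]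

theorem IsRSP.realizedIn_antitone (hrsp : IsRSP N Δ (· ≤ ·) rt R) (s : Set (FmlInst L 1 N)) :
    Antitone fun t ↦ RealizedIn R t s :=
  fun _ _ hst ⟨b, hb, hbs⟩ ↦ ⟨b, hrsp.mono _ _ hst b hb, hbs⟩

theorem IsRSP.exists_isGreatest_realizedIn (hrsp : IsRSP N Δ (· ≤ ·) rt R)
    {s : Set (FmlInst L 1 N)} (hs : s.Finite) (hsΔ : s ⊆ deltaInsts Δ)
    (hsat : ∃ b, ∀ q ∈ s, Realizes b q) (t : T) :
    ∃ u, IsGreatest {v | v ≤ t ∧ RealizedIn R v s} u := by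
  rcases s.eq_empty_or_nonempty with rfl | hne
  · obtain ⟨b, hb⟩ := hrsp.r_nonempty t
    exact ⟨t, ⟨le_rfl, b, hb, by simp⟩, fun v hv ↦ hv.1⟩
  obtain ⟨q, hqΔ, hq⟩ := exists_realizes_iff_of_finite hrsp.conj_closed hs hne hsΔ
  obtain ⟨u, hut, ⟨b, hb, hbq⟩, hmax⟩ :=
    hrsp.clause_j t _ hqΔ q.2.2 (hsat.imp fun b hb ↦ (hq b).2 hb)
  exact ⟨u, ⟨hut, b, hb, (hq b).1 hbq⟩,
    fun v ⟨hvt, b, hb, hbs⟩ ↦ hmax v hvt ⟨b, hb, (hq b).2 hbs⟩⟩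

theorem IsRSP.exists_le_realizedIn_not_realizedIn (hrsp : IsRSP N Δ (· ≤ ·) rt R) {C : Set T}
    (hne : C.Nonempty) {I : Set (FmlInst L 1 N)} (hIΔ : I ⊆ deltaInsts Δ)
    (hCI : ∀ a ∈ C, FinRealizedIn R a I) {c : T} (hc : c ∈ upperBounds C)
    (hcI : ¬ FinRealizedIn R c I) :
    ∃ x ∈ upperBounds C, x ≤ c ∧
      ∃ s : {s // s ⊆ I ∧ s.Finite}, RealizedIn R x s.1 ∧ ¬ RealizedIn R c s.1 := by
  simp only [FinRealizedIn, not_forall] at hcI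
  obtain ⟨s, hsI, hs, hcs⟩ := hcI
  obtain ⟨a, ha⟩ := hne
  obtain ⟨b, -, hb⟩ := hCI a ha s hsI hs
  obtain ⟨x, ⟨hxc, hxs⟩, hmax⟩ := hrsp.exists_isGreatest_realizedIn hs (hsI.trans hIΔ) ⟨b, hb⟩ c
  exact ⟨x, fun a ha ↦ hmax ⟨hc ha, hCI a ha s hsI hs⟩, hxc, ⟨s, hsI, hs⟩, hxs, hcs⟩

theorem IsRSP.exists_upperBound_finRealizedIn (hrsp : IsRSP N Δ (· ≤ ·) rt R) {C : Set T}
    (hC : IsChain (· ≤ ·) C) (hne : C.Nonempty) (hbdd : BddAbove C) {I : Set (FmlInst L 1 N)}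
    (hIΔ : I ⊆ deltaInsts Δ) {μ : Cardinal} (hμ : ℵ₀ ≤ μ) (hCμ : #C ≤ μ) (hIμ : #I ≤ μ)
    (hμp : μ < pCard (T := T) (· ≤ ·)) (hCI : ∀ a ∈ C, FinRealizedIn R a I) :
    ∃ s ∈ upperBounds C, FinRealizedIn R s I := by
  by_contra! hbad
  obtain ⟨D, hDC, hD, hDΛ, hgap⟩ := exists_gap_of_forall_exists_label hbdd
    (fun (s : {s : Set (FmlInst L 1 N) // s ⊆ I ∧ s.Finite}) t ↦ RealizedIn R t s.1)
    (fun s ↦ hrsp.realizedIn_antitone s.1)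
    fun c hc ↦ hrsp.exists_le_realizedIn_not_realizedIn hne hIΔ hCI hc (hbad c hc)
  have hDne : D.Nonempty := by
    obtain ⟨c, hc⟩ := hbdd
    by_contra! h
    exact hgap c hc (by simp [h])
  refine hμp.not_ge ?_
  calc pCard (T := T) (· ≤ ·) ≤ #C + #D := pCard_le_mk_add_mk hC hD hne hDne hDC hgap
    _ ≤ μ + μ := add_le_add hCμ (hDΛ.trans ((mk_finite_subsets_le I).trans (max_le hμ hIμ)))
    _ = μ := add_eq_self hμ

theorem IsRSP.exists_upperBound_realizes_finRealizedIn (hrsp : IsRSP N Δ (· ≤ ·) rt R)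
    {C : Set T} (hC : IsChain (· ≤ ·) C) (hne : C.Nonempty) (hbdd : BddAbove C)
    {I : Set (FmlInst L 1 N)} (hIΔ : I ⊆ deltaInsts Δ) {μ : Cardinal} (hμ : ℵ₀ ≤ μ)
    (hCμ : #C ≤ μ) (hIμ : #I ≤ μ) (hμp : μ < pCard (T := T) (· ≤ ·))
    (hCI : ∀ a ∈ C, FinRealizedIn R a I) {q : FmlInst L 1 N} (hq : q ∈ I) :
    ∃ x ∈ upperBounds C, (∀ b, R b x → Realizes b q) ∧ FinRealizedIn R x I := by
  obtain ⟨s, hsC, hsI⟩ := hrsp.exists_upperBound_finRealizedIn hC hne hbdd hIΔ hμ hCμ hIμ hμp hCI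
  obtain ⟨b, hb, hbq⟩ := hsI {q} (Set.singleton_subset_iff.2 hq) (Set.finite_singleton q)
  obtain ⟨x, hsx, hx⟩ := hrsp.clause_i s _ (hIΔ hq) q.2.2 ⟨b, hb, hbq q rfl⟩
  refine ⟨x, fun a ha ↦ (hsC ha).trans hsx, fun b hb ↦ ((hx b).1 hb).2, fun s' hs'I hs' ↦ ?_⟩
  obtain ⟨b, hb, hbs⟩ := hsI (insert q s') (Set.insert_subset hq hs'I) (hs'.insert q)
  exact ⟨b, (hx b).2 ⟨hb, hbs q (Set.mem_insert q s')⟩,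
    fun r hr ↦ hbs r (Set.mem_insert_of_mem q hr)⟩

theorem IsRSP.exists_monotone_realizes (hrsp : IsRSP N Δ (· ≤ ·) rt R) {μ : Cardinal}
    (hμ : ℵ₀ ≤ μ) (hμt : μ < tCard (T := T) (· ≤ ·)) (hμp : μ < pCard (T := T) (· ≤ ·))
    (E : μ.ord.ToType → FmlInst L 1 N) (hEΔ : Set.range E ⊆ deltaInsts Δ)
    (hroot : FinRealizedIn R rt (Set.range E)) :
    ∃ t : μ.ord.ToType → T, Monotone t ∧ ∀ i b, R b (t i) → Realizes b (E i) := by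
  have : Nonempty T := ⟨rt⟩
  refine (exists_transfinite_seq (fun i A x ↦ x ∈ upperBounds A ∧
    (∀ b, R b x → Realizes b (E i)) ∧ FinRealizedIn R x (E '' Set.Ici i)) fun i t ht ↦ ?_).imp
    fun t ht ↦ ⟨monotone_iff_forall_lt.2 fun j i hji ↦ (ht i).1 ⟨j, hji, rfl⟩, fun i ↦ (ht i).2.1⟩
  set C := insert rt (t '' Set.Iio i)
  have hC : IsChain (· ≤ ·) C := by
    refine IsChain.insert ?_ fun a _ _ ↦ .inl (hrsp.root_le a)
    rintro _ ⟨j, hj, rfl⟩ _ ⟨k, hk, rfl⟩ -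
    rcases lt_trichotomy j k with hjk | rfl | hkj
    · exact .inl ((ht k hk).1 ⟨j, hjk, rfl⟩)
    · exact .inl le_rfl
    · exact .inr ((ht j hj).1 ⟨k, hkj, rfl⟩)
  have hCμ : #C ≤ μ := calc
    #C ≤ #(t '' Set.Iio i) + 1 := mk_insert_le
    _ ≤ μ + 1 := by
      gcongr
      exact mk_image_le.trans (by simpa using mk_Iio_lt i : #(Set.Iio i) < μ).le
    _ = μ := add_one_eq hμ
  have hCI : ∀ a ∈ C, FinRealizedIn R a (E '' Set.Ici i) := by
    rintro _ (rfl | ⟨j, hj, rfl⟩) s hs hsfin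
    · exact hroot s (hs.trans (Set.image_subset_range _ _)) hsfin
    · exact (ht j hj).2.2 s (hs.trans (Set.image_mono (Set.Ici_subset_Ici.2 hj.le))) hsfin
  obtain ⟨x, hxC, hx⟩ := hrsp.exists_upperBound_realizes_finRealizedIn hC
    (Set.insert_nonempty _ _) (bddAbove_of_mk_lt_tCard hC (Set.insert_nonempty _ _)
      (hCμ.trans_lt hμt)) ((Set.image_subset_range _ _).trans hEΔ) hμ hCμ
    (mk_image_le.trans ((mk_set_le _).trans (mk_ord_toType μ).le)) hμp hCI
    (Set.mem_image_of_mem E Set.self_mem_Ici)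
  exact ⟨x, fun a ha ↦ hxC (Set.mem_insert_of_mem _ ha), hx⟩

end RSP

/-- If `(N, Δ, 𝒯, ≤_𝒯, rt, R)` is an RSP and `κ = min{𝔱(𝒯), 𝔭(𝒯)}`, then `N`
is `(κ,1,Δ)`-saturated: every set of fewer than `κ` instances of formulas of `Δ` with
parameters from `N` which is finitely satisfiable in `N` is realized by a single element
of `N`. -/
theorem rsp_saturation {L : FirstOrder.Language.{0, 0}} (N : Type) [L.Structure N]
    (Δ : Set (Σ m : ℕ, L.Formula (Fin 1 ⊕ Fin m)))
    {T : Type} (le : T → T → Prop) (rt : T) (R : N → T → Prop)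
    (hrsp : IsRSP N Δ le rt R) :
    ∀ p : Set (FmlInst L 1 N),
      (∀ q ∈ p, (⟨q.1, q.2.1⟩ : Σ m : ℕ, L.Formula (Fin 1 ⊕ Fin m)) ∈ Δ) →
      #p < min (tCard le) (pCard le) →
      (∀ s ⊆ p, s.Finite → ∃ b : N, ∀ q ∈ s, Realize1 q.2.1 b q.2.2) →
      ∃ b : N, ∀ q ∈ p, Realize1 q.2.1 b q.2.2 := by
  let _ : Preorder T := { le := le, le_refl := hrsp.refl, le_trans := hrsp.trans }
  intro p hpΔ hcard hfs
  obtain hfin | hinf := p.finite_or_infinite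
  · exact hfs p subset_rfl hfin
  have hp : ℵ₀ ≤ #p := aleph0_le_mk_iff.2 hinf.to_subtype
  have hpt : #p < tCard le := hcard.trans_le (min_le_left _ _)
  have hpp : #p < pCard le := hcard.trans_le (min_le_right _ _)
  obtain ⟨e⟩ : Nonempty ((#p).ord.ToType ≃ p) := Cardinal.eq.1 (mk_ord_toType _)
  have hrange : Set.range (Subtype.val ∘ e) = p := by
    rw [e.surjective.range_comp, Subtype.range_coe]
  obtain ⟨t, ht, hte⟩ := hrsp.exists_monotone_realizes hp hpt hpp _ (hrange ▸ hpΔ) <| by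
      rw [hrange]
      exact fun s hs hsfin ↦ (hfs s hs hsfin).imp fun b hb ↦ ⟨hrsp.root_R b, hb⟩
  have : Nonempty (#p).ord.ToType := hinf.nonempty.to_subtype.map e.symm
  obtain ⟨ub, hub⟩ := bddAbove_of_mk_lt_tCard ht.isChain_range (Set.range_nonempty t)
    ((mk_range_le.trans (mk_ord_toType _).le).trans_lt hpt)
  obtain ⟨b, hb⟩ := hrsp.r_nonempty ub
  refine ⟨b, fun q hq ↦ ?_⟩
  have hbq := hte (e.symm ⟨q, hq⟩) b (hrsp.mono _ _ (hub ⟨_, rfl⟩) b hb)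
  rwa [Function.comp_apply, Equiv.apply_symm_apply] at hbq

end Shelah1064
end

section
/- Let τ₀ be a vocabulary, Δ the set of all finite conjunctions of atomic first-order τ₀-formulas with one distinguished free variable x, and τ = τ₀ ∪ {𝒯, ≤_𝒯, R, P, c} ∪ {F_φ : φ ∈ Δ}, where 𝒯 and P are new unary predicates, ≤_𝒯 and R are new binary predicates, c is a new constant, and F_φ is a new (n+1)-ary function symbol for φ = φ(x, y₀,…,y_{n−1}) ∈ Δ. Then there is a set T of Horn sentences of the first-order language of τ such that for every τ-structure M: M ⊨ T if and only if (M,Δ) is a packaged RSP. -/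
open FirstOrder Cardinal

namespace Shelah1064

/-! ### Horn sentences -/

/-- A Horn clause: a disjunction of negated atomic formulas together with at most one
(non-negated) atomic formula. -/
inductive IsHornClause {L : Language} {α : Type*} : ∀ {n : ℕ}, L.BoundedFormula α n → Prop
  | pos {n} {φ : L.BoundedFormula α n} : φ.IsAtomic → IsHornClause φ
  | neg {n} {φ : L.BoundedFormula α n} : φ.IsAtomic → IsHornClause φ.not
  | cons {n} {φ ψ : L.BoundedFormula α n} :
      φ.IsAtomic → IsHornClause ψ → IsHornClause (φ.not ⊔ ψ)

/-- A Horn matrix: a conjunction of Horn clauses. -/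
inductive IsHornMatrix {L : Language} {α : Type*} : ∀ {n : ℕ}, L.BoundedFormula α n → Prop
  | of_clause {n} {φ : L.BoundedFormula α n} : IsHornClause φ → IsHornMatrix φ
  | inf {n} {φ ψ : L.BoundedFormula α n} :
      IsHornMatrix φ → IsHornMatrix ψ → IsHornMatrix (φ ⊓ ψ)

/-- A Horn formula in prenex form: quantifiers over a Horn matrix. -/
inductive IsHornPrenex {L : Language} {α : Type*} : ∀ {n : ℕ}, L.BoundedFormula α n → Prop
  | of_matrix {n} {φ : L.BoundedFormula α n} : IsHornMatrix φ → IsHornPrenex φ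
  | all {n} {φ : L.BoundedFormula α (n + 1)} : IsHornPrenex φ → IsHornPrenex φ.all
  | ex {n} {φ : L.BoundedFormula α (n + 1)} : IsHornPrenex φ → IsHornPrenex φ.ex

/-- A Horn sentence. -/
def IsHornSentence {L : Language} (σ : L.Sentence) : Prop := IsHornPrenex σ

/-! ### The vocabulary `τ = τ₀ ∪ {𝒯, ≤_𝒯, R, P, c} ∪ {F_φ : φ ∈ Δ}` -/

/-- The new relation symbols: `𝒯` and `P` (unary), `≤_𝒯` and `R` (binary). -/
inductive RSPExtraRel : ℕ → Type
  | tree : RSPExtraRel 1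
  | pp : RSPExtraRel 1
  | le : RSPExtraRel 2
  | rel : RSPExtraRel 2

/-- `Δ`: a finite conjunction of atomic `τ₀`-formulas `φ(x, y₀, …, y_{n-1})`. -/
def ConjAt (L₀ : FirstOrder.Language.{0, 0}) (n : ℕ) : Type :=
  {φ : L₀.Formula (Fin 1 ⊕ Fin n) // IsConjAtomic φ}

/-- The new function symbols: the constant `c` and, for each `φ = φ(x,y₀,…,y_{n-1}) ∈ Δ`,
an `(n+1)`-ary function symbol `F_φ`. -/
def RSPExtraFun (L₀ : FirstOrder.Language.{0, 0}) (n : ℕ) : Type :=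
  Nat.casesOn n PUnit fun m => ConjAt L₀ m

/-- The extended vocabulary `τ`. -/
def LRSP (L₀ : FirstOrder.Language.{0, 0}) : Language :=
  L₀.sum ⟨RSPExtraFun L₀, RSPExtraRel⟩

section

variable (L₀ : FirstOrder.Language.{0, 0}) {M : Type} [iM : (LRSP L₀).Structure M]

/-- The interpretation of the predicate `𝒯`. -/
def mTree (a : M) : Prop :=
  @Language.Structure.RelMap (LRSP L₀) M iM 1 (Sum.inr RSPExtraRel.tree) ![a]

/-- The interpretation of the predicate `P`. -/
def mP (a : M) : Prop :=
  @Language.Structure.RelMap (LRSP L₀) M iM 1 (Sum.inr RSPExtraRel.pp) ![a]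

/-- The interpretation of `≤_𝒯`. -/
def mLe (a b : M) : Prop :=
  @Language.Structure.RelMap (LRSP L₀) M iM 2 (Sum.inr RSPExtraRel.le) ![a, b]

/-- The interpretation of `R`. -/
def mR (a b : M) : Prop :=
  @Language.Structure.RelMap (LRSP L₀) M iM 2 (Sum.inr RSPExtraRel.rel) ![a, b]

/-- The interpretation of the constant `c` (the root). -/
def mRoot : M :=
  @Language.Structure.funMap (LRSP L₀) M iM 0 (Sum.inr PUnit.unit) ![]

/-- The interpretation of the function symbol `F_φ` at `(t, ā)`. -/
def mF {n : ℕ} (φ : ConjAt L₀ n) (t : M) (a : Fin n → M) : M :=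
  @Language.Structure.funMap (LRSP L₀) M iM (n + 1) (Sum.inr φ) (Fin.cons t a)

/-- Satisfaction `N ⊨ φ[b, ā]` for the `τ₀`-formula `φ ∈ Δ`, interpreted in the
`τ`-structure `M` via the inclusion `τ₀ ⊆ τ`. -/
def mRealize {n : ℕ} (φ : ConjAt L₀ n) (b : M) (a : Fin n → M) : Prop :=
  @Language.Formula.Realize (LRSP L₀) M iM _
    (Language.LHom.onFormula Language.LHom.sumInl φ.1) (Sum.elim (fun _ => b) a)

/-- `(M, Δ)` is a packaged RSP. -/
def PackagedRSP : Prop :=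
  -- `P^M` is closed under the `τ₀`-functions, and `τ₀`-relations hold only among `P^M`
  (∀ (n : ℕ) (f : L₀.Functions n) (x : Fin n → M), (∀ i, mP L₀ (x i)) →
    mP L₀ (@Language.Structure.funMap (LRSP L₀) M iM n (Sum.inl f) x)) ∧
  (∀ (n : ℕ) (r : L₀.Relations n) (x : Fin n → M),
    @Language.Structure.RelMap (LRSP L₀) M iM n (Sum.inl r) x → ∀ i, mP L₀ (x i)) ∧
  -- `≤_𝒯` is reflexive and transitive on `𝒯^M` with least element `c^M ∈ 𝒯^M`
  (∀ a b : M, mLe L₀ a b → mTree L₀ a ∧ mTree L₀ b) ∧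
  (∀ a : M, mTree L₀ a → mLe L₀ a a) ∧
  (∀ a b c : M, mLe L₀ a b → mLe L₀ b c → mLe L₀ a c) ∧
  mTree L₀ (mRoot L₀ : M) ∧
  (∀ a : M, mTree L₀ a → mLe L₀ (mRoot L₀) a) ∧
  -- `R^M ⊆ P^M × 𝒯^M`
  (∀ a b : M, mR L₀ a b → mP L₀ a ∧ mTree L₀ b) ∧
  -- clause (f)
  (∀ a : M, mP L₀ a → mR L₀ a (mRoot L₀)) ∧
  -- clause (g)
  (∀ s t : M, mLe L₀ s t → ∀ a : M, mR L₀ a t → mR L₀ a s) ∧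
  -- clause (h)
  (∀ t : M, mTree L₀ t → ∃ a : M, mP L₀ a ∧ mR L₀ a t) ∧
  -- clause (i)
  (∀ s : M, mTree L₀ s → ∀ (n : ℕ) (φ : ConjAt L₀ n) (av : Fin n → M),
    (∀ i, mP L₀ (av i)) → (∃ b : M, mP L₀ b ∧ mR L₀ b s ∧ mRealize L₀ φ b av) →
    ∃ t : M, mTree L₀ t ∧ mLe L₀ s t ∧
      ∀ b : M, mP L₀ b → (mR L₀ b t ↔ mR L₀ b s ∧ mRealize L₀ φ b av)) ∧
  -- clause (j), witnessed by `F_φ`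
  (∀ t : M, mTree L₀ t → ∀ (n : ℕ) (φ : ConjAt L₀ n) (av : Fin n → M),
    (∀ i, mP L₀ (av i)) → (∃ b : M, mP L₀ b ∧ mRealize L₀ φ b av) →
    mTree L₀ (mF L₀ φ t av) ∧ mLe L₀ (mF L₀ φ t av) t ∧
    (∃ b : M, mP L₀ b ∧ mR L₀ b (mF L₀ φ t av) ∧ mRealize L₀ φ b av) ∧
    ∀ s₁ : M, mTree L₀ s₁ → mLe L₀ s₁ t →
      (∃ b : M, mP L₀ b ∧ mR L₀ b s₁ ∧ mRealize L₀ φ b av) → mLe L₀ s₁ (mF L₀ φ t av))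

end

/-!
Take for `T` the set of all Horn sentences true in every packaged RSP; then every packaged RSP is
a model of `T`, and it remains to see that each defining clause of a packaged RSP follows from a
single member of `T`. The universal clauses are Horn sentences as they stand (a conjunction of
atomic premises is absorbed into each Horn clause of the conclusion). Clauses (h), (i) and (j)
become Horn once their existential witness `y` is pulled to the front,
`∀ x̄ ∃ y ∀ z̄ (premises(x̄) → conclusion(x̄, y, z̄))`: this holds in every packaged RSP, since a
witness exists when the premises hold and any element will do otherwise. For (j) the witness
`F_φ(t, ā)` is a term, so its maximality is a universal statement.
-/

section Horn

open Language BoundedFormula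

variable {L : Language} {α β γ : Type*}

theorem IsConjAtomic.isHornMatrix {n : ℕ} {φ : L.BoundedFormula α n} (h : IsConjAtomic φ) :
    IsHornMatrix φ := by
  induction h with
  | of_isAtomic h => exact .of_clause (.pos h)
  | inf _ _ ih₁ ih₂ => exact .inf ih₁ ih₂

theorem IsConjAtomic.relabel {m n : ℕ} {φ : L.BoundedFormula α m} (h : IsConjAtomic φ)
    (g : α → β ⊕ Fin n) : IsConjAtomic (φ.relabel g) := by
  induction h with
  | of_isAtomic h => exact .of_isAtomic (h.relabel g)
  | inf _ _ ih₁ ih₂ => exact .inf ih₁ ih₂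

theorem IsConjAtomic.onBoundedFormula {L' : Language} (g : L →ᴸ L') {n : ℕ}
    {φ : L.BoundedFormula α n} (h : IsConjAtomic φ) : IsConjAtomic (g.onBoundedFormula φ) := by
  induction h with
  | of_isAtomic h =>
    cases h with
    | equal => exact .of_isAtomic (.equal _ _)
    | rel => exact .of_isAtomic (.rel _ _)
  | inf _ _ ih₁ ih₂ => exact .inf ih₁ ih₂

theorem IsHornClause.relabel {m n : ℕ} {φ : L.BoundedFormula α m} (h : IsHornClause φ)
    (g : α → β ⊕ Fin n) : IsHornClause (φ.relabel g) := by
  induction h with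
  | pos h => exact .pos (h.relabel g)
  | neg h => exact .neg (h.relabel g)
  | cons h _ ih => exact .cons (h.relabel g) ih

theorem IsHornMatrix.relabel {m n : ℕ} {φ : L.BoundedFormula α m} (h : IsHornMatrix φ)
    (g : α → β ⊕ Fin n) : IsHornMatrix (φ.relabel g) := by
  induction h with
  | of_clause h => exact .of_clause (h.relabel g)
  | inf _ _ ih₁ ih₂ => exact .inf ih₁ ih₂

theorem IsHornPrenex.relabel {m n : ℕ} {φ : L.BoundedFormula α m} (h : IsHornPrenex φ)
    (g : α → β ⊕ Fin n) : IsHornPrenex (φ.relabel g) := by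
  induction h with
  | of_matrix h => exact .of_matrix (h.relabel g)
  | all _ ih => rw [relabel_all]; exact ih.all
  | ex _ ih => rw [relabel_ex]; exact ih.ex

theorem IsHornPrenex.alls {n : ℕ} {φ : L.BoundedFormula α n} (h : IsHornPrenex φ) :
    IsHornPrenex φ.alls := by
  induction n with
  | zero => exact h
  | succ n ih => exact ih h.all

theorem IsHornPrenex.exs {n : ℕ} {φ : L.BoundedFormula α n} (h : IsHornPrenex φ) :
    IsHornPrenex φ.exs := by
  induction n with
  | zero => exact h
  | succ n ih => exact ih h.ex

theorem IsHornPrenex.iAlls [Finite β] {φ : L.Formula (α ⊕ β)} (h : IsHornPrenex φ) :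
    IsHornPrenex (φ.iAlls β) :=
  (h.relabel _).alls

theorem IsHornPrenex.iExs [Finite β] {φ : L.Formula (α ⊕ β)} (h : IsHornPrenex φ) :
    IsHornPrenex (φ.iExs β) :=
  (h.relabel _).exs

def IsHornExpressible {n : ℕ} (φ : L.BoundedFormula α n) : Prop :=
  ∃ θ : L.BoundedFormula α n, IsHornMatrix θ ∧
    ∀ (M : Type) [L.Structure M] (v : α → M) (xs : Fin n → M), θ.Realize v xs ↔ φ.Realize v xs

theorem IsHornMatrix.isHornExpressible {n : ℕ} {φ : L.BoundedFormula α n} (h : IsHornMatrix φ) :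
    IsHornExpressible φ :=
  ⟨φ, h, fun _ _ _ _ => Iff.rfl⟩

theorem IsConjAtomic.isHornExpressible {n : ℕ} {φ : L.BoundedFormula α n}
    (h : IsConjAtomic φ) : IsHornExpressible φ :=
  h.isHornMatrix.isHornExpressible

theorem IsHornExpressible.congr {n : ℕ} {φ ψ : L.BoundedFormula α n} (h : IsHornExpressible φ)
    (hψ : ∀ (M : Type) [L.Structure M] (v : α → M) (xs : Fin n → M),
      φ.Realize v xs ↔ ψ.Realize v xs) : IsHornExpressible ψ :=
  let ⟨θ, hθ, hθφ⟩ := h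
  ⟨θ, hθ, fun M _ v xs => (hθφ M v xs).trans (hψ M v xs)⟩

theorem IsHornExpressible.inf {n : ℕ} {φ ψ : L.BoundedFormula α n} (hφ : IsHornExpressible φ)
    (hψ : IsHornExpressible ψ) : IsHornExpressible (φ ⊓ ψ) :=
  let ⟨θ, hθ, hθφ⟩ := hφ
  let ⟨η, hη, hηψ⟩ := hψ
  ⟨θ ⊓ η, hθ.inf hη, fun M _ v xs => by simp only [realize_inf, hθφ, hηψ]⟩

theorem IsHornMatrix.isHornExpressible_imp_of_isAtomic {n : ℕ} {H C : L.BoundedFormula α n}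
    (hH : H.IsAtomic) (hC : IsHornMatrix C) : IsHornExpressible (H.imp C) := by
  induction hC with
  | of_clause hC =>
    exact ⟨_, .of_clause (.cons hH hC), fun M _ v xs => by
      simp only [realize_sup, realize_not, realize_imp, imp_iff_not_or]⟩
  | inf _ _ ih₁ ih₂ =>
    refine (ih₁.inf ih₂).congr fun M _ v xs => ?_
    simp only [realize_inf, realize_imp, imp_and]

theorem IsHornExpressible.imp {n : ℕ} {H C : L.BoundedFormula α n} (hH : IsConjAtomic H)
    (hC : IsHornExpressible C) : IsHornExpressible (H.imp C) := by
  induction hH generalizing C with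
  | of_isAtomic hH =>
    obtain ⟨θ, hθ, hθC⟩ := hC
    refine (hθ.isHornExpressible_imp_of_isAtomic hH).congr fun M _ v xs => ?_
    simp only [realize_imp, hθC]
  | inf _ _ ih₁ ih₂ =>
    refine (ih₁ (ih₂ hC)).congr fun M _ v xs => ?_
    simp only [realize_imp, realize_inf, and_imp]

theorem realize_foldr_imp {M : Type*} [L.Structure M] (Hs : List (L.Formula α))
    (C : L.Formula α) (v : α → M) :
    Formula.Realize (Hs.foldr BoundedFormula.imp C) v ↔ (∀ H ∈ Hs, H.Realize v) → C.Realize v := by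
  induction Hs with
  | nil => simp
  | cons H Hs ih =>
    simp only [List.foldr_cons, Formula.realize_imp, ih, List.forall_mem_cons, and_imp]

theorem IsHornExpressible.foldr_imp {n : ℕ} {Hs : List (L.BoundedFormula α n)}
    (hHs : ∀ H ∈ Hs, IsConjAtomic H) {C : L.BoundedFormula α n} (hC : IsHornExpressible C) :
    IsHornExpressible (Hs.foldr BoundedFormula.imp C) := by
  induction Hs with
  | nil => exact hC
  | cons H Hs ih =>
    rw [List.forall_mem_cons] at hHs
    exact .imp hHs.1 (ih hHs.2)

def hornTheory (K : ∀ M : Type, L.Structure M → Prop) : L.Theory :=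
  {σ | IsHornSentence σ ∧ ∀ (M : Type) [iM : L.Structure M], K M iM → M ⊨ σ}

theorem model_hornTheory {K : ∀ M : Type, L.Structure M → Prop} {M : Type} [iM : L.Structure M]
    (h : K M iM) : M ⊨ hornTheory K :=
  ⟨fun _ hσ => hσ.2 M h⟩

def HornImplied (K Q : ∀ M : Type, L.Structure M → Prop) : Prop :=
  ∃ σ : L.Sentence, IsHornSentence σ ∧ (∀ (M : Type) [iM : L.Structure M], K M iM → M ⊨ σ) ∧
    ∀ (M : Type) [iM : L.Structure M], M ⊨ σ → Q M iM

theorem HornImplied.of_model {K Q : ∀ M : Type, L.Structure M → Prop} (h : HornImplied K Q)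
    {M : Type} [iM : L.Structure M] (hM : M ⊨ hornTheory K) : Q M iM :=
  let ⟨σ, hσ, hKσ, hσQ⟩ := h
  hσQ M (hM.realize_of_mem σ ⟨hσ, hKσ⟩)

theorem hornImplied_of_forall [Finite α] {K Q : ∀ M : Type, L.Structure M → Prop}
    {φ : L.Formula α} (hφ : IsHornExpressible φ)
    (hK : ∀ (M : Type) [iM : L.Structure M], K M iM → ∀ v : α → M, φ.Realize v)
    (hQ : ∀ (M : Type) [iM : L.Structure M], (∀ v : α → M, φ.Realize v) → Q M iM) :
    HornImplied K Q := by
  obtain ⟨θ, hθ, hθφ⟩ := hφ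
  have hσ : ∀ (M : Type) [L.Structure M], M ⊨ Formula.iAlls α (Formula.relabel Sum.inr θ) ↔
      ∀ v : α → M, φ.Realize v := fun M _ => by
    simp only [Sentence.Realize, Formula.realize_iAlls, Formula.realize_relabel]
    exact forall_congr' fun v => hθφ M v default
  exact ⟨_, ((IsHornPrenex.of_matrix hθ).relabel _).iAlls, fun M _ h => (hσ M).2 (hK M h),
    fun M _ h => hQ M ((hσ M).1 h)⟩

theorem hornImplied_of_forall_exists_forall [Finite α] [Finite β] [Finite γ]
    {K Q : ∀ M : Type, L.Structure M → Prop} {φ : L.Formula ((α ⊕ β) ⊕ γ)}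
    (hφ : IsHornExpressible φ)
    (hK : ∀ (M : Type) [iM : L.Structure M], K M iM →
      ∀ x : α → M, ∃ y : β → M, ∀ z : γ → M, φ.Realize (Sum.elim (Sum.elim x y) z))
    (hQ : ∀ (M : Type) [iM : L.Structure M],
      (∀ x : α → M, ∃ y : β → M, ∀ z : γ → M, φ.Realize (Sum.elim (Sum.elim x y) z)) →
        Q M iM) :
    HornImplied K Q := by
  obtain ⟨θ, hθ, hθφ⟩ := hφ
  have hσ : ∀ (M : Type) [L.Structure M], M ⊨ Formula.iAlls α (Formula.relabel Sum.inr
        (Formula.iExs β (Formula.iAlls γ θ))) ↔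
      ∀ x : α → M, ∃ y : β → M, ∀ z : γ → M, φ.Realize (Sum.elim (Sum.elim x y) z) :=
      fun M _ => by
    simp only [Sentence.Realize, Formula.realize_iAlls, Formula.realize_relabel,
      Formula.realize_iExs, Sum.elim_comp_inr]
    exact forall_congr' fun x => exists_congr fun y => forall_congr' fun z => hθφ M _ default
  exact ⟨_, ((((IsHornPrenex.of_matrix hθ).iAlls).iExs).relabel _).iAlls,
    fun M _ h => (hσ M).2 (hK M h), fun M _ h => hQ M ((hσ M).1 h)⟩

end Horn

section Atoms

open Language

variable (L₀ : FirstOrder.Language.{0, 0}) {α : Type*}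

def rootTerm : (LRSP L₀).Term α :=
  Term.func (L := LRSP L₀) (l := 0) (Sum.inr PUnit.unit) finZeroElim

def fTerm {n : ℕ} (φ : ConjAt L₀ n) (t : (LRSP L₀).Term α) (a : Fin n → (LRSP L₀).Term α) :
    (LRSP L₀).Term α :=
  Term.func (L := LRSP L₀) (l := n + 1) (Sum.inr φ) (Fin.cons t a)

def treeAtom (t : (LRSP L₀).Term α) : (LRSP L₀).Formula α :=
  Relations.formula₁ (Sum.inr RSPExtraRel.tree) t

def pAtom (t : (LRSP L₀).Term α) : (LRSP L₀).Formula α :=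
  Relations.formula₁ (Sum.inr RSPExtraRel.pp) t

def leAtom (t₁ t₂ : (LRSP L₀).Term α) : (LRSP L₀).Formula α :=
  Relations.formula₂ (Sum.inr RSPExtraRel.le) t₁ t₂

def rAtom (t₁ t₂ : (LRSP L₀).Term α) : (LRSP L₀).Formula α :=
  Relations.formula₂ (Sum.inr RSPExtraRel.rel) t₁ t₂

def deltaFormula {n : ℕ} (φ : ConjAt L₀ n) (b : α) (a : Fin n → α) : (LRSP L₀).Formula α :=
  (LHom.sumInl.onFormula φ.1).relabel (Sum.elim (fun _ => b) a)

theorem isConjAtomic_treeAtom (t : (LRSP L₀).Term α) : IsConjAtomic (treeAtom L₀ t) :=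
  .of_isAtomic (.rel _ _)

theorem isConjAtomic_pAtom (t : (LRSP L₀).Term α) : IsConjAtomic (pAtom L₀ t) :=
  .of_isAtomic (.rel _ _)

theorem isConjAtomic_leAtom (t₁ t₂ : (LRSP L₀).Term α) : IsConjAtomic (leAtom L₀ t₁ t₂) :=
  .of_isAtomic (.rel _ _)

theorem isConjAtomic_rAtom (t₁ t₂ : (LRSP L₀).Term α) : IsConjAtomic (rAtom L₀ t₁ t₂) :=
  .of_isAtomic (.rel _ _)

theorem isConjAtomic_deltaFormula {n : ℕ} (φ : ConjAt L₀ n) (b : α) (a : Fin n → α) :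
    IsConjAtomic (deltaFormula L₀ φ b a) :=
  (φ.2.onBoundedFormula _).relabel _

variable {L₀} {M : Type} [iM : (LRSP L₀).Structure M] (v : α → M)

@[simp]
theorem realize_rootTerm : (rootTerm L₀).realize v = mRoot L₀ :=
  congrArg (Structure.funMap _) (Subsingleton.elim _ _)

@[simp]
theorem realize_fTerm {n : ℕ} (φ : ConjAt L₀ n) (t : (LRSP L₀).Term α)
    (a : Fin n → (LRSP L₀).Term α) :
    (fTerm L₀ φ t a).realize v = mF L₀ φ (t.realize v) fun i => (a i).realize v :=
  congrArg (Structure.funMap _) (funext fun j => Fin.cases rfl (fun _ => rfl) j)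

@[simp]
theorem realize_treeAtom (t : (LRSP L₀).Term α) :
    (treeAtom L₀ t).Realize v ↔ mTree L₀ (t.realize v) :=
  Formula.realize_rel₁

@[simp]
theorem realize_pAtom (t : (LRSP L₀).Term α) : (pAtom L₀ t).Realize v ↔ mP L₀ (t.realize v) :=
  Formula.realize_rel₁

@[simp]
theorem realize_leAtom (t₁ t₂ : (LRSP L₀).Term α) :
    (leAtom L₀ t₁ t₂).Realize v ↔ mLe L₀ (t₁.realize v) (t₂.realize v) :=
  Formula.realize_rel₂

@[simp]
theorem realize_rAtom (t₁ t₂ : (LRSP L₀).Term α) :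
    (rAtom L₀ t₁ t₂).Realize v ↔ mR L₀ (t₁.realize v) (t₂.realize v) :=
  Formula.realize_rel₂

@[simp]
theorem realize_deltaFormula {n : ℕ} (φ : ConjAt L₀ n) (b : α) (a : Fin n → α) :
    (deltaFormula L₀ φ b a).Realize v ↔ mRealize L₀ φ (v b) fun i => v (a i) := by
  erw [deltaFormula, Formula.realize_relabel, Sum.comp_elim]
  rfl

end Atoms

section Clauses

open Language Term

variable (L₀ : FirstOrder.Language.{0, 0}) {α : Type*}

theorem hornImplied_mP_funMap {n : ℕ} (f : L₀.Functions n) : HornImplied (@PackagedRSP L₀)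
    fun M iM => ∀ x : Fin n → M, (∀ i, mP L₀ (x i)) →
      mP L₀ (@Structure.funMap (LRSP L₀) M iM n (Sum.inl f) x) :=
  hornImplied_of_forall (α := Fin n)
    (φ := (List.ofFn fun i => pAtom L₀ (var i)).foldr (· ⟹ ·)
      (pAtom L₀ (func (L := LRSP L₀) (Sum.inl f) var)))
    (.foldr_imp (by simp [isConjAtomic_pAtom]) (isConjAtomic_pAtom ..).isHornExpressible)
    (fun M _ h v => by
      simp only [realize_foldr_imp, List.forall_mem_ofFn_iff, realize_pAtom]
      exact h.1 n f v)
    fun M _ h x => by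
      simp only [realize_foldr_imp, List.forall_mem_ofFn_iff, realize_pAtom] at h
      exact h x

theorem hornImplied_mP_of_relMap {n : ℕ} (r : L₀.Relations n) (i : Fin n) :
    HornImplied (@PackagedRSP L₀) fun M iM => ∀ x : Fin n → M,
      @Structure.RelMap (LRSP L₀) M iM n (Sum.inl r) x → mP L₀ (x i) :=
  hornImplied_of_forall (α := Fin n)
    (φ := Relations.formula (L := LRSP L₀) (Sum.inl r) var ⟹ pAtom L₀ (var i))
    (.imp (.of_isAtomic (.rel _ _)) (isConjAtomic_pAtom ..).isHornExpressible)
    (fun M _ h v => by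
      simp only [Formula.realize_imp, realize_pAtom]
      exact fun hv => h.2.1 n r v hv i)
    fun M _ h x => by
      simp only [Formula.realize_imp, realize_pAtom] at h
      exact h x

theorem hornImplied_mTree_of_mLe : HornImplied (@PackagedRSP L₀)
    fun M _ => ∀ a b : M, mLe L₀ a b → mTree L₀ a ∧ mTree L₀ b :=
  hornImplied_of_forall (α := Fin 2)
    (φ := leAtom L₀ (var 0) (var 1) ⟹ treeAtom L₀ (var 0) ⊓ treeAtom L₀ (var 1))
    (.imp (isConjAtomic_leAtom ..)
      ((isConjAtomic_treeAtom ..).isHornExpressible.inf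
        (isConjAtomic_treeAtom ..).isHornExpressible))
    (fun M _ h v => by simpa using h.2.2.1 (v 0) (v 1))
    fun M _ h a b => by simpa using h ![a, b]

theorem hornImplied_mLe_refl : HornImplied (@PackagedRSP L₀)
    fun M _ => ∀ a : M, mTree L₀ a → mLe L₀ a a :=
  hornImplied_of_forall (α := Fin 1)
    (φ := treeAtom L₀ (var 0) ⟹ leAtom L₀ (var 0) (var 0))
    (.imp (isConjAtomic_treeAtom ..) (isConjAtomic_leAtom ..).isHornExpressible)
    (fun M _ h v => by simpa using h.2.2.2.1 (v 0))
    fun M _ h a => by simpa using h ![a]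

theorem hornImplied_mLe_trans : HornImplied (@PackagedRSP L₀)
    fun M _ => ∀ a b c : M, mLe L₀ a b → mLe L₀ b c → mLe L₀ a c :=
  hornImplied_of_forall (α := Fin 3)
    (φ := leAtom L₀ (var 0) (var 1) ⊓ leAtom L₀ (var 1) (var 2) ⟹ leAtom L₀ (var 0) (var 2))
    (.imp (.inf (isConjAtomic_leAtom ..) (isConjAtomic_leAtom ..))
      (isConjAtomic_leAtom ..).isHornExpressible)
    (fun M _ h v => by simpa using h.2.2.2.2.1 (v 0) (v 1) (v 2))
    fun M _ h a b c => by simpa using h ![a, b, c]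

theorem hornImplied_mTree_mRoot : HornImplied (@PackagedRSP L₀)
    fun M _ => mTree L₀ (mRoot L₀ : M) :=
  hornImplied_of_forall (α := Empty)
    (φ := treeAtom L₀ (rootTerm L₀))
    (isConjAtomic_treeAtom ..).isHornExpressible
    (fun M _ h v => by simpa using h.2.2.2.2.2.1)
    fun M _ h => by simpa using h isEmptyElim

theorem hornImplied_mRoot_mLe : HornImplied (@PackagedRSP L₀)
    fun M _ => ∀ a : M, mTree L₀ a → mLe L₀ (mRoot L₀) a :=
  hornImplied_of_forall (α := Fin 1)
    (φ := treeAtom L₀ (var 0) ⟹ leAtom L₀ (rootTerm L₀) (var 0))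
    (.imp (isConjAtomic_treeAtom ..) (isConjAtomic_leAtom ..).isHornExpressible)
    (fun M _ h v => by simpa using h.2.2.2.2.2.2.1 (v 0))
    fun M _ h a => by simpa using h ![a]

theorem hornImplied_mP_mTree_of_mR : HornImplied (@PackagedRSP L₀)
    fun M _ => ∀ a b : M, mR L₀ a b → mP L₀ a ∧ mTree L₀ b :=
  hornImplied_of_forall (α := Fin 2)
    (φ := rAtom L₀ (var 0) (var 1) ⟹ pAtom L₀ (var 0) ⊓ treeAtom L₀ (var 1))
    (.imp (isConjAtomic_rAtom ..)
      ((isConjAtomic_pAtom ..).isHornExpressible.inf (isConjAtomic_treeAtom ..).isHornExpressible))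
    (fun M _ h v => by simpa using h.2.2.2.2.2.2.2.1 (v 0) (v 1))
    fun M _ h a b => by simpa using h ![a, b]

theorem hornImplied_mR_mRoot : HornImplied (@PackagedRSP L₀)
    fun M _ => ∀ a : M, mP L₀ a → mR L₀ a (mRoot L₀) :=
  hornImplied_of_forall (α := Fin 1)
    (φ := pAtom L₀ (var 0) ⟹ rAtom L₀ (var 0) (rootTerm L₀))
    (.imp (isConjAtomic_pAtom ..) (isConjAtomic_rAtom ..).isHornExpressible)
    (fun M _ h v => by simpa using h.2.2.2.2.2.2.2.2.1 (v 0))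
    fun M _ h a => by simpa using h ![a]

theorem hornImplied_mR_antitone : HornImplied (@PackagedRSP L₀)
    fun M _ => ∀ s t : M, mLe L₀ s t → ∀ a : M, mR L₀ a t → mR L₀ a s :=
  hornImplied_of_forall (α := Fin 3)
    (φ := leAtom L₀ (var 0) (var 1) ⊓ rAtom L₀ (var 2) (var 1) ⟹ rAtom L₀ (var 2) (var 0))
    (.imp (.inf (isConjAtomic_leAtom ..) (isConjAtomic_rAtom ..))
      (isConjAtomic_rAtom ..).isHornExpressible)
    (fun M _ h v => by simpa using fun hle => h.2.2.2.2.2.2.2.2.2.1 (v 0) (v 1) hle (v 2))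
    fun M _ h s t hle a => by simpa [hle] using h ![s, t, a]

theorem hornImplied_exists_mR : HornImplied (@PackagedRSP L₀)
    fun M _ => ∀ t : M, mTree L₀ t → ∃ a : M, mP L₀ a ∧ mR L₀ a t :=
  hornImplied_of_forall_exists_forall (α := Unit) (β := Unit) (γ := Empty)
    (φ := treeAtom L₀ (var (.inl (.inl ()))) ⟹
      pAtom L₀ (var (.inl (.inr ()))) ⊓ rAtom L₀ (var (.inl (.inr ()))) (var (.inl (.inl ()))))
    (.imp (isConjAtomic_treeAtom ..)
      ((isConjAtomic_pAtom ..).isHornExpressible.inf (isConjAtomic_rAtom ..).isHornExpressible))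
    (fun M _ h x => by
      by_cases ht : mTree L₀ (x ())
      · obtain ⟨a, ha⟩ := h.2.2.2.2.2.2.2.2.2.2.1 _ ht
        exact ⟨fun _ => a, fun _ => by simpa using fun _ => ha⟩
      · exact ⟨x, fun _ => by simp [ht]⟩)
    fun M _ h t ht => by
      obtain ⟨y, hy⟩ := h fun _ => t
      exact ⟨y (), by simpa [ht] using hy isEmptyElim⟩

/-- Clause (i) with `t` as an explicit variable, to be quantified existentially. -/
def clauseIMatrix {n : ℕ} (φ : ConjAt L₀ n) (a : Fin n → α) (s b₀ t b : α) :
    (LRSP L₀).Formula α :=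
  (List.ofFn fun i => pAtom L₀ (var (a i))).foldr (· ⟹ ·)
    (treeAtom L₀ (var s) ⊓ pAtom L₀ (var b₀) ⊓ rAtom L₀ (var b₀) (var s) ⊓ deltaFormula L₀ φ b₀ a ⟹
      treeAtom L₀ (var t) ⊓ leAtom L₀ (var s) (var t) ⊓
        (pAtom L₀ (var b) ⊓ rAtom L₀ (var b) (var t) ⟹
          rAtom L₀ (var b) (var s) ⊓ deltaFormula L₀ φ b a) ⊓
        (pAtom L₀ (var b) ⊓ rAtom L₀ (var b) (var s) ⊓ deltaFormula L₀ φ b a ⟹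
          rAtom L₀ (var b) (var t)))

theorem isHornExpressible_clauseIMatrix {n : ℕ} (φ : ConjAt L₀ n) (a : Fin n → α)
    (s b₀ t b : α) : IsHornExpressible (clauseIMatrix L₀ φ a s b₀ t b) := by
  refine .foldr_imp (by simp [isConjAtomic_pAtom]) ?_
  apply_rules [IsHornExpressible.inf, IsHornExpressible.imp, IsConjAtomic.inf,
    IsConjAtomic.isHornExpressible, isConjAtomic_treeAtom, isConjAtomic_pAtom, isConjAtomic_leAtom,
    isConjAtomic_rAtom, isConjAtomic_deltaFormula]

theorem realize_clauseIMatrix {M : Type} [iM : (LRSP L₀).Structure M] (v : α → M) {n : ℕ}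
    (φ : ConjAt L₀ n) (a : Fin n → α) (s b₀ t b : α) :
    (clauseIMatrix L₀ φ a s b₀ t b).Realize v ↔
      ((∀ i, mP L₀ (v (a i))) → mTree L₀ (v s) → mP L₀ (v b₀) → mR L₀ (v b₀) (v s) →
        mRealize L₀ φ (v b₀) (fun i => v (a i)) →
        mTree L₀ (v t) ∧ mLe L₀ (v s) (v t) ∧
          (mP L₀ (v b) → mR L₀ (v b) (v t) →
            mR L₀ (v b) (v s) ∧ mRealize L₀ φ (v b) (fun i => v (a i))) ∧
          (mP L₀ (v b) → mR L₀ (v b) (v s) → mRealize L₀ φ (v b) (fun i => v (a i)) →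
            mR L₀ (v b) (v t))) := by
  simp [clauseIMatrix, realize_foldr_imp, and_assoc]

theorem hornImplied_clause_i {n : ℕ} (φ : ConjAt L₀ n) : HornImplied (@PackagedRSP L₀)
    fun M _ => ∀ s : M, mTree L₀ s → ∀ av : Fin n → M, (∀ i, mP L₀ (av i)) →
      (∃ b : M, mP L₀ b ∧ mR L₀ b s ∧ mRealize L₀ φ b av) →
      ∃ t : M, mTree L₀ t ∧ mLe L₀ s t ∧
        ∀ b : M, mP L₀ b → (mR L₀ b t ↔ mR L₀ b s ∧ mRealize L₀ φ b av) :=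
  hornImplied_of_forall_exists_forall (α := Fin n ⊕ Fin 2) (β := Unit) (γ := Unit)
    (φ := clauseIMatrix L₀ φ (fun i => .inl (.inl (.inl i))) (.inl (.inl (.inr 0)))
      (.inl (.inl (.inr 1))) (.inl (.inr ())) (.inr ()))
    (isHornExpressible_clauseIMatrix ..)
    (fun M _ h x => by
      simp only [realize_clauseIMatrix, Sum.elim_inl, Sum.elim_inr]
      by_cases hx : (∀ i, mP L₀ (x (.inl i))) ∧ mTree L₀ (x (.inr 0)) ∧ mP L₀ (x (.inr 1)) ∧
          mR L₀ (x (.inr 1)) (x (.inr 0)) ∧ mRealize L₀ φ (x (.inr 1)) fun i => x (.inl i)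
      · obtain ⟨ha, hs, hb₀, hR, hφ⟩ := hx
        obtain ⟨t, ht, hst, htR⟩ := h.2.2.2.2.2.2.2.2.2.2.2.1 _ hs n φ _ ha ⟨_, hb₀, hR, hφ⟩
        exact ⟨fun _ => t, fun z _ _ _ _ _ => ⟨ht, hst, fun hz hzt => (htR _ hz).1 hzt,
          fun hz hzs hzφ => (htR _ hz).2 ⟨hzs, hzφ⟩⟩⟩
      · exact ⟨fun _ => x (.inr 0), fun _ ha hs hb₀ hR hφ => (hx ⟨ha, hs, hb₀, hR, hφ⟩).elim⟩)
    fun M _ h s hs av ha ⟨b₀, hb₀, hR, hφ⟩ => by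
      obtain ⟨y, hy⟩ := h (Sum.elim av ![s, b₀])
      simp only [realize_clauseIMatrix, Sum.elim_inl, Sum.elim_inr] at hy
      have hy' := fun z => hy z ha hs hb₀ hR hφ
      refine ⟨y (), (hy' fun _ => b₀).1, (hy' fun _ => b₀).2.1, fun b hb => ?_⟩
      obtain ⟨-, -, hbt, hbs⟩ := hy' fun _ => b
      exact ⟨hbt hb, fun ⟨hs, hφ⟩ => hbs hb hs hφ⟩

/-- Clause (j) with the element `b` of `R_{F_φ(t, ā)} ∩ φ(N, ā)` as an explicit variable, to be
quantified existentially. -/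
def clauseJMatrix {n : ℕ} (φ : ConjAt L₀ n) (a : Fin n → α) (t b₀ b s₁ b₁ : α) :
    (LRSP L₀).Formula α :=
  let F := fTerm L₀ φ (var t) fun i => var (a i)
  (List.ofFn fun i => pAtom L₀ (var (a i))).foldr (· ⟹ ·)
    (treeAtom L₀ (var t) ⊓ pAtom L₀ (var b₀) ⊓ deltaFormula L₀ φ b₀ a ⟹
      treeAtom L₀ F ⊓ leAtom L₀ F (var t) ⊓ pAtom L₀ (var b) ⊓ rAtom L₀ (var b) F ⊓
        deltaFormula L₀ φ b a ⊓
        (treeAtom L₀ (var s₁) ⊓ leAtom L₀ (var s₁) (var t) ⊓ pAtom L₀ (var b₁) ⊓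
          rAtom L₀ (var b₁) (var s₁) ⊓ deltaFormula L₀ φ b₁ a ⟹ leAtom L₀ (var s₁) F))

theorem isHornExpressible_clauseJMatrix {n : ℕ} (φ : ConjAt L₀ n) (a : Fin n → α)
    (t b₀ b s₁ b₁ : α) : IsHornExpressible (clauseJMatrix L₀ φ a t b₀ b s₁ b₁) := by
  refine .foldr_imp (by simp [isConjAtomic_pAtom]) ?_
  apply_rules [IsHornExpressible.inf, IsHornExpressible.imp, IsConjAtomic.inf,
    IsConjAtomic.isHornExpressible, isConjAtomic_treeAtom, isConjAtomic_pAtom, isConjAtomic_leAtom,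
    isConjAtomic_rAtom, isConjAtomic_deltaFormula]

theorem realize_clauseJMatrix {M : Type} [iM : (LRSP L₀).Structure M] (v : α → M) {n : ℕ}
    (φ : ConjAt L₀ n) (a : Fin n → α) (t b₀ b s₁ b₁ : α) :
    (clauseJMatrix L₀ φ a t b₀ b s₁ b₁).Realize v ↔
      ((∀ i, mP L₀ (v (a i))) → mTree L₀ (v t) → mP L₀ (v b₀) →
        mRealize L₀ φ (v b₀) (fun i => v (a i)) →
        mTree L₀ (mF L₀ φ (v t) fun i => v (a i)) ∧ mLe L₀ (mF L₀ φ (v t) fun i => v (a i)) (v t) ∧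
          mP L₀ (v b) ∧ mR L₀ (v b) (mF L₀ φ (v t) fun i => v (a i)) ∧
          mRealize L₀ φ (v b) (fun i => v (a i)) ∧
          (mTree L₀ (v s₁) → mLe L₀ (v s₁) (v t) → mP L₀ (v b₁) → mR L₀ (v b₁) (v s₁) →
            mRealize L₀ φ (v b₁) (fun i => v (a i)) →
            mLe L₀ (v s₁) (mF L₀ φ (v t) fun i => v (a i)))) := by
  simp [clauseJMatrix, realize_foldr_imp, and_assoc]

theorem hornImplied_clause_j {n : ℕ} (φ : ConjAt L₀ n) : HornImplied (@PackagedRSP L₀)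
    fun M _ => ∀ t : M, mTree L₀ t → ∀ av : Fin n → M, (∀ i, mP L₀ (av i)) →
      (∃ b : M, mP L₀ b ∧ mRealize L₀ φ b av) →
      mTree L₀ (mF L₀ φ t av) ∧ mLe L₀ (mF L₀ φ t av) t ∧
      (∃ b : M, mP L₀ b ∧ mR L₀ b (mF L₀ φ t av) ∧ mRealize L₀ φ b av) ∧
      ∀ s₁ : M, mTree L₀ s₁ → mLe L₀ s₁ t →
        (∃ b : M, mP L₀ b ∧ mR L₀ b s₁ ∧ mRealize L₀ φ b av) → mLe L₀ s₁ (mF L₀ φ t av) :=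
  hornImplied_of_forall_exists_forall (α := Fin n ⊕ Fin 2) (β := Unit) (γ := Fin 2)
    (φ := clauseJMatrix L₀ φ (fun i => .inl (.inl (.inl i))) (.inl (.inl (.inr 0)))
      (.inl (.inl (.inr 1))) (.inl (.inr ())) (.inr 0) (.inr 1))
    (isHornExpressible_clauseJMatrix ..)
    (fun M _ h x => by
      simp only [realize_clauseJMatrix, Sum.elim_inl, Sum.elim_inr]
      by_cases hx : (∀ i, mP L₀ (x (.inl i))) ∧ mTree L₀ (x (.inr 0)) ∧ mP L₀ (x (.inr 1)) ∧
          mRealize L₀ φ (x (.inr 1)) fun i => x (.inl i)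
      · obtain ⟨ha, ht, hb₀, hφ⟩ := hx
        obtain ⟨hF, hFt, ⟨b, hb, hbF, hbφ⟩, hmax⟩ :=
          h.2.2.2.2.2.2.2.2.2.2.2.2 _ ht n φ _ ha ⟨_, hb₀, hφ⟩
        exact ⟨fun _ => b, fun z _ _ _ _ => ⟨hF, hFt, hb, hbF, hbφ,
          fun hs₁ hs₁t hb₁ hb₁s₁ hb₁φ => hmax _ hs₁ hs₁t ⟨_, hb₁, hb₁s₁, hb₁φ⟩⟩⟩
      · exact ⟨fun _ => x (.inr 0), fun _ ha ht hb₀ hφ => (hx ⟨ha, ht, hb₀, hφ⟩).elim⟩)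
    fun M _ h t ht av ha ⟨b₀, hb₀, hφ⟩ => by
      obtain ⟨y, hy⟩ := h (Sum.elim av ![t, b₀])
      simp only [realize_clauseJMatrix, Sum.elim_inl, Sum.elim_inr] at hy
      have hy' := fun z => hy z ha ht hb₀ hφ
      obtain ⟨hF, hFt, hb, hbF, hbφ, -⟩ := hy' fun _ => b₀
      exact ⟨hF, hFt, ⟨y (), hb, hbF, hbφ⟩, fun s₁ hs₁ hs₁t ⟨b₁, hb₁, hb₁s₁, hb₁φ⟩ =>
        (hy' ![s₁, b₁]).2.2.2.2.2 hs₁ hs₁t hb₁ hb₁s₁ hb₁φ⟩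

end Clauses

/-- There is a set `T` of Horn sentences of the language of
`τ = τ₀ ∪ {𝒯, ≤_𝒯, R, P, c} ∪ {F_φ : φ ∈ Δ}` such that for every `τ`-structure `M`:
`M ⊨ T` iff `(M,Δ)` is a packaged RSP. -/
theorem exists_horn_axiomatization_of_rsp (L₀ : FirstOrder.Language.{0, 0}) :
    ∃ TS : Set ((LRSP L₀).Sentence),
      (∀ σ ∈ TS, IsHornSentence σ) ∧
      ∀ (M : Type) (iM : (LRSP L₀).Structure M),
        @Language.Theory.Model (LRSP L₀) M iM TS ↔ @PackagedRSP L₀ M iM := by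
  refine ⟨hornTheory (@PackagedRSP L₀), fun _ hσ => hσ.1, fun M iM =>
    ⟨fun h => ?_, model_hornTheory⟩⟩
  exact ⟨fun _ f => (hornImplied_mP_funMap L₀ f).of_model h,
    fun _ r x hx i => (hornImplied_mP_of_relMap L₀ r i).of_model h x hx,
    (hornImplied_mTree_of_mLe L₀).of_model h,
    (hornImplied_mLe_refl L₀).of_model h,
    (hornImplied_mLe_trans L₀).of_model h,
    (hornImplied_mTree_mRoot L₀).of_model h,
    (hornImplied_mRoot_mLe L₀).of_model h,
    (hornImplied_mP_mTree_of_mR L₀).of_model h,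
    (hornImplied_mR_mRoot L₀).of_model h,
    (hornImplied_mR_antitone L₀).of_model h,
    (hornImplied_exists_mR L₀).of_model h,
    fun s hs _ φ => (hornImplied_clause_i L₀ φ).of_model h s hs,
    fun t ht _ φ => (hornImplied_clause_j L₀ φ).of_model h t ht⟩

end Shelah1064
end

section
/- Let D be an ultrafilter on a set I, let N be a first-order structure, let μ = ‖N‖ + |τ(N)| (the cardinality of the universe of N plus the cardinality of its vocabulary), and let λ be an infinite cardinal. If the ultrapower (^{ω>}μ, ⊴)^I/D — where ^{ω>}μ is the set of finite sequences from μ and ⊴ is the initial-segment relation — is (λ⁺, atomically)-saturated, then the ultrapower N^I/D is λ⁺-saturated: every set of at most λ first-order formulas in one free variable with parameters from N^I/D which is finitely satisfiable in N^I/D is realized in N^I/D. -/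
open FirstOrder Cardinal

namespace Shelah1064

/-! ### Reduced products of first-order structures with respect to a filter -/

def rpSetoid {I : Type*} (D : Filter I) (M : I → Type*) : Setoid (∀ i, M i) where
  r f g := ∀ᶠ i in D, f i = g i
  iseqv := ⟨fun _ => Filter.Eventually.of_forall fun _ => rfl,
    fun h => h.mono fun _ e => e.symm,
    fun h₁ h₂ => h₂.mp (h₁.mono fun _ e₁ e₂ => e₁.trans e₂)⟩

/-- The reduced product `∏ᵢ Mᵢ / D`. -/
def RedProd {I : Type*} (D : Filter I) (M : I → Type*) : Type _ :=
  Quotient (rpSetoid D M)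

noncomputable instance RedProd.instStructure {I : Type*} {L : Language} (D : Filter I)
    (M : I → Type*) [∀ i, L.Structure (M i)] : L.Structure (RedProd D M) where
  funMap F x := Quotient.mk (rpSetoid D M) fun i =>
    Language.Structure.funMap F fun k => (Quotient.out (s := rpSetoid D M) (x k)) i
  RelMap r x := ∀ᶠ i in D,
    Language.Structure.RelMap r fun k => (Quotient.out (s := rpSetoid D M) (x k)) i

/-- The reduced power `M^I/D`. -/
abbrev RedPow {I : Type*} (D : Filter I) (M : Type*) : Type _ := RedProd D fun _ : I => M

/-- The lift of a binary relation to the reduced product: it holds of two classes iff it holds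
`D`-eventually of representatives. -/
def rpLiftRel {I : Type*} (D : Filter I) {M : I → Type*} (r : ∀ i, M i → M i → Prop)
    (x y : RedProd D M) : Prop :=
  ∀ᶠ i in D, r i (Quotient.out (s := rpSetoid D M) x i) (Quotient.out (s := rpSetoid D M) y i)

/-- The tree `^{ω>}X` of finite sequences from `X`, ordered by the initial-segment
relation `⊴`. -/
def PrefOrd (X : Type*) : Type _ := List X

instance (X : Type*) : LE (PrefOrd X) := ⟨fun a b => List.IsPrefix a b⟩

instance (X : Type*) : FirstOrder.Language.order.Structure (PrefOrd X) :=
  Language.orderStructure _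

/-!
By Łoś's theorem, a type `p` over `N^I/D` is realized as soon as one can pick, for `D`-almost
every `i`, a realized set `w i` of instances over `N` that contains the `i`-th coordinate of each
`q ∈ p` for `D`-almost every `i`. For infinite `N` there are at most `‖N‖ + |τ(N)|` instances, so
a node of the tree `^{ω>}μ` codes a finite set of them, and an element `y` of the tree ultrapower
codes at each `i` the instances listed in `y i`. Call `y` good if for each finite `v ⊆ p`, at
`D`-almost every `i`, these instances are realized together with the coordinates of `v`.
Along a well-ordering of `p` we build an increasing chain of good elements, appending the code of
the next coordinate instance at each step. At every stage atomic saturation of the tree ultrapower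
is used twice: to bound the chain so far by some `g`, and then to squeeze an element between the
chain and the longest good initial segments of `g`; being below those, it is good.
For finite `N`, the ultrapower is finite, hence trivially saturated.
-/

open FirstOrder.Language Filter

universe u

namespace RedProd

variable {L : Language} {I : Type*} {M : I → Type*}

def mk (D : Filter I) (f : ∀ i, M i) : RedProd D M := Quotient.mk (rpSetoid D M) f

theorem mk_eq_mk {D : Filter I} {f g : ∀ i, M i} : mk D f = mk D g ↔ ∀ᶠ i in D, f i = g i :=
  Quotient.eq (r := rpSetoid D M)

@[simp]
theorem mk_out {D : Filter I} (x : RedProd D M) : mk D x.out = x := Quotient.out_eq x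

theorem out_mk {D : Filter I} (f : ∀ i, M i) : ∀ᶠ i in D, (mk D f).out i = f i :=
  mk_eq_mk.1 (mk_out _)

def equivProduct (D : Filter I) : RedProd D M ≃ D.Product M :=
  Quotient.congr (Equiv.refl _) fun _ _ => Iff.rfl

theorem equivProduct_apply {D : Filter I} (x : RedProd D M) :
    equivProduct D x = ((x.out : ∀ i, M i) : D.Product M) := by
  conv_lhs => rw [← mk_out x]
  rfl

variable [∀ i, L.Structure (M i)]

noncomputable def equivUltraproduct (D : Ultrafilter I) :
    RedProd (D : Filter I) M ≃[L] (D : Filter I).Product M where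
  toEquiv := equivProduct (D : Filter I)
  map_fun' F x := by
    change equivProduct _ (mk _ fun i => Structure.funMap F fun k => (x k).out i) =
      Structure.funMap F (equivProduct _ ∘ x)
    have hx : equivProduct (D : Filter I) ∘ x = fun k => ((x k).out : (D : Filter I).Product M) :=
      funext fun k => equivProduct_apply (x k)
    rw [hx]
    exact (Ultraproduct.funMap_cast F fun k => (x k).out).symm
  map_rel' r x := by
    change Structure.RelMap r (equivProduct _ ∘ x) ↔ _
    simp only [Function.comp_def, equivProduct_apply]
    exact relMap_quotient_mk' (s := (D : Filter I).productSetoid M) r _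

noncomputable def coordInst {D : Filter I} {ε : ℕ} (q : FmlInst L ε (RedProd D M)) (i : I) :
    FmlInst L ε (M i) :=
  ⟨q.1, q.2.1, fun k => (q.2.2 k).out i⟩

variable [∀ i, Nonempty (M i)] (D : Ultrafilter I)

theorem realize_formula_mk {β : Type*} (φ : L.Formula β) (f : β → ∀ i, M i) :
    (φ.Realize fun s => mk D (f s)) ↔ ∀ᶠ i in (D : Filter I), φ.Realize fun s => f s i := by
  rw [← Ultraproduct.realize_formula_cast,
    ← StrongHomClass.realize_formula (equivUltraproduct (L := L) D)]
  rfl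

theorem realizesInst_mk_iff {ε : ℕ} (x : Fin ε → ∀ i, M i)
    (q : FmlInst L ε (RedProd (D : Filter I) M)) :
    RealizesInst (fun k => mk (D : Filter I) (x k)) q ↔
      ∀ᶠ i in (D : Filter I), RealizesInst (fun k => x k i) (coordInst q i) := by
  have hq : Sum.elim (fun k => mk (D : Filter I) (x k)) q.2.2 =
      fun s => mk (D : Filter I) (Sum.elim x (fun k => (q.2.2 k).out) s) := by
    funext s
    cases s <;> simp
  simp only [RealizesInst, coordInst, hq, realize_formula_mk]
  refine eventually_congr (.of_forall fun i => ?_)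
  congr! 1
  funext s
  cases s <;> rfl

end RedProd

theorem RedPow.finite {I N : Type*} (D : Ultrafilter I) [Finite N] :
    Finite (RedPow (D : Filter I) N) := by
  refine Finite.of_surjective (fun c : N => RedProd.mk (D : Filter I) fun _ => c) fun x => ?_
  obtain ⟨c, hc⟩ := D.eventually_exists_iff.1
    (.of_forall fun i => ⟨x.out i, rfl⟩ : ∀ᶠ i in (D : Filter I), ∃ c, c = x.out i)
  rw [← RedProd.mk_out x]
  exact ⟨c, RedProd.mk_eq_mk.2 hc⟩

theorem tupSaturated_of_finite {L : Language} {M : Type*} [L.Structure M] [Finite M]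
    (κ : Cardinal) (ε : ℕ) (Δ : Set (Σ m : ℕ, L.Formula (Fin ε ⊕ Fin m))) :
    TupSaturated κ ε Δ M := by
  intro p _ _ hfin
  by_contra! h
  choose Q hQp hQ using h
  obtain ⟨x, hx⟩ := hfin (Set.range Q) (Set.range_subset_iff.2 hQp) (Set.finite_range Q)
  exact hQ x (hx _ (Set.mem_range_self x))

section Tree

variable {I X : Type*}

def EventuallyPrefix (D : Filter I) (f g : I → List X) : Prop := ∀ᶠ i in D, f i <+: g i

notation:50 f " <+:ᶠ[" D "] " g => EventuallyPrefix D f g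

variable {D : Filter I}

theorem EventuallyPrefix.trans {f g h : I → List X} (hfg : f <+:ᶠ[D] g) (hgh : g <+:ᶠ[D] h) :
    f <+:ᶠ[D] h :=
  (hfg.and hgh).mono fun _ h => h.1.trans h.2

instance : IsTrans (I → List X) (EventuallyPrefix D) := ⟨fun _ _ _ => EventuallyPrefix.trans⟩

theorem directed_append_singleton {P : Type*} [LinearOrder P] {A : P → I → List X}
    {c : P → I → X} (hA : ∀ γ, ∀ δ < γ, (fun i => A δ i ++ [c δ i]) <+:ᶠ[D] A γ) :
    Directed (EventuallyPrefix D) fun γ i => A γ i ++ [c γ i] :=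
  directed_of_isDirected_le fun δ γ h => h.eq_or_lt.elim
    (fun h => h ▸ .of_forall fun _ => List.prefix_refl _)
    fun h => (hA γ δ h).trans (.of_forall fun _ => List.prefix_append _ _)

theorem relMap_leSymb_mk_iff (f g : I → List X) :
    Structure.RelMap (leSymb : Language.order.Relations 2)
      ![(RedProd.mk D f : RedPow D (PrefOrd X)), RedProd.mk D g] ↔ f <+:ᶠ[D] g := by
  change (∀ᶠ i in D, (RedProd.mk D f).out i <+: (RedProd.mk D g).out i) ↔ _
  refine eventually_congr (((RedProd.out_mk f).and (RedProd.out_mk g)).mono fun i h => ?_)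
  rw [h.1, h.2]

variable {M : Type*} [Language.order.Structure M]

def belowInst (c : M) : FmlInst Language.order 1 M :=
  ⟨1, (var (.inl (.inl 0))).le (var (.inl (.inr 0))), fun _ => c⟩

def aboveInst (c : M) : FmlInst Language.order 1 M :=
  ⟨1, (var (.inl (.inr 0))).le (var (.inl (.inl 0))), fun _ => c⟩

theorem realizesInst_belowInst (x : Fin 1 → M) (c : M) :
    RealizesInst x (belowInst c) ↔
      Structure.RelMap (leSymb : Language.order.Relations 2) ![x 0, c] := by
  simp only [RealizesInst, belowInst, Term.le, Formula.Realize, BoundedFormula.realize_rel₂,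
    Term.realize_var, Sum.elim_inl, Sum.elim_inr]

theorem realizesInst_aboveInst (x : Fin 1 → M) (c : M) :
    RealizesInst x (aboveInst c) ↔
      Structure.RelMap (leSymb : Language.order.Relations 2) ![c, x 0] := by
  simp only [RealizesInst, aboveInst, Term.le, Formula.Realize, BoundedFormula.realize_rel₂,
    Term.realize_var, Sum.elim_inl, Sum.elim_inr]

end Tree

section LongestPrefix

variable {X : Type*}

open Classical in
noncomputable def longestPrefix (Q : List X → Prop) (l : List X) : List X :=
  l.take (Nat.findGreatest (fun n => Q (l.take n)) l.length)

theorem prefix_longestPrefix {Q : List X → Prop} {l l' : List X} (h : l' <+: l) (hQ : Q l') :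
    l' <+: longestPrefix Q l := by
  classical
  rw [List.prefix_iff_eq_take.1 h] at hQ ⊢
  exact List.take_prefix_take_left (Nat.le_findGreatest h.length_le hQ)

theorem longestPrefix_spec {Q : List X → Prop} (l : List X) (hQ : Q []) :
    Q (longestPrefix Q l) := by
  classical
  exact Nat.findGreatest_spec (P := fun n => Q (l.take n)) (Nat.zero_le _) (by simpa using hQ)

end LongestPrefix

section GoodBranch

open Cardinal

variable {I X V P : Type u} {D : Filter I} {lam : Cardinal.{u}}

theorem exists_interpolant (hlam : ℵ₀ ≤ lam)
    (hsat : AtomSaturated (L := Language.order) (Order.succ lam) (RedPow D (PrefOrd X)))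
    {J K : Type u} (hJ : #J ≤ lam) (hK : #K ≤ lam) (a : J → I → List X) (b : K → I → List X)
    (hab : ∀ (s : Finset J) (t : Finset K),
      ∃ y, (∀ j ∈ s, a j <+:ᶠ[D] y) ∧ ∀ k ∈ t, y <+:ᶠ[D] b k) :
    ∃ y, (∀ j, a j <+:ᶠ[D] y) ∧ ∀ k, y <+:ᶠ[D] b k := by
  classical
  let F : J ⊕ K → FmlInst Language.order 1 (RedPow D (PrefOrd X)) :=
    Sum.elim (fun j => aboveInst (RedProd.mk D (a j) : RedPow D (PrefOrd X)))
      fun k => belowInst (RedProd.mk D (b k) : RedPow D (PrefOrd X))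
  have hF : ∀ y z, RealizesInst (fun _ => (RedProd.mk D y : RedPow D (PrefOrd X))) (F z) ↔
      Sum.elim (fun j => a j <+:ᶠ[D] y) (fun k => y <+:ᶠ[D] b k) z := by
    rintro y (j | k)
    · exact (realizesInst_aboveInst _ _).trans (relMap_leSymb_mk_iff _ _)
    · exact (realizesInst_belowInst _ _).trans (relMap_leSymb_mk_iff _ _)
  have hatomic : ∀ q ∈ Set.range F, q.2.1.IsAtomic := by
    rintro _ ⟨j | k, rfl⟩ <;> exact BoundedFormula.IsAtomic.rel _ _
  have hcard : #(Set.range F) < Order.succ lam := by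
    refine Order.lt_succ_iff.2 (mk_range_le.trans ?_)
    rw [mk_sum, lift_id, lift_id]
    exact (add_le_add hJ hK).trans (add_eq_self hlam).le
  have hfin : ∀ s ⊆ Set.range F, s.Finite → ∃ x : Fin 1 → RedPow D (PrefOrd X),
      ∀ q ∈ s, RealizesInst x q := by
    intro s hs hsfin
    rw [← Set.image_univ] at hs
    obtain ⟨t, -, ht, rfl⟩ := Set.exists_subset_image_finite_and.1 ⟨s, hs, hsfin, rfl⟩
    obtain ⟨y, hay, hyb⟩ := hab ht.toFinset.toLeft ht.toFinset.toRight
    refine ⟨fun _ => RedProd.mk D y, ?_⟩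
    rintro _ ⟨j | k, hz, rfl⟩
    · exact (hF y _).2 (hay j (by simpa using hz))
    · exact (hF y _).2 (hyb k (by simpa using hz))
  obtain ⟨x, hx⟩ := hsat (Set.range F) hatomic hcard hfin
  have hx0 : x = fun _ => RedProd.mk D (x 0).out := funext fun k => by
    rw [Subsingleton.elim k 0, RedProd.mk_out]
  refine ⟨(x 0).out, fun j => ?_, fun k => ?_⟩
  · exact (hF _ (.inl j)).1 (hx0 ▸ hx _ (Set.mem_range_self _))
  · exact (hF _ (.inr k)).1 (hx0 ▸ hx _ (Set.mem_range_self _))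

def IsGood (D : Filter I) (Good : V → I → List X → Prop) (y : I → List X) : Prop :=
  ∀ v, ∀ᶠ i in D, Good v i (y i)

variable {Good : V → I → List X → Prop}

theorem exists_good_upper_bound (hlam : ℵ₀ ≤ lam)
    (hsat : AtomSaturated (L := Language.order) (Order.succ lam) (RedPow D (PrefOrd X)))
    (hV : #V ≤ lam) (hGood : ∀ v i ⦃l l'⦄, l' <+: l → Good v i l → Good v i l')
    (hroot : IsGood D Good fun _ => []) {J : Type u} (hJ : #J ≤ lam) (b : J → I → List X)
    (hdir : Directed (EventuallyPrefix D) b) (hb : ∀ j, IsGood D Good (b j)) :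
    ∃ y, IsGood D Good y ∧ ∀ j, b j <+:ᶠ[D] y := by
  rcases isEmpty_or_nonempty J with hJ0 | hJ0
  · exact ⟨_, hroot, isEmptyElim⟩
  obtain ⟨g, hbg, -⟩ := exists_interpolant hlam hsat hJ (by simp) b PEmpty.elim fun s _ =>
    let ⟨j, hj⟩ := hdir.finset_le s
    ⟨b j, hj, nofun⟩
  -- Good nodes are closed under initial segments, so whatever lies below every `top v` is good.
  let top (v : V) (i : I) : List X := longestPrefix (Good v i) (g i)
  have hb_top : ∀ j v, b j <+:ᶠ[D] top v := fun j v =>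
    ((hb j v).and (hbg j)).mono fun _ h => prefix_longestPrefix h.2 h.1
  obtain ⟨y, hby, hytop⟩ := exists_interpolant hlam hsat hJ hV b top fun s _ =>
    let ⟨j, hj⟩ := hdir.finset_le s
    ⟨b j, hj, fun v _ => hb_top j v⟩
  refine ⟨y, fun v => ?_, hby⟩
  filter_upwards [hytop v, hroot v] with i hyi hi
  exact hGood v i hyi (longestPrefix_spec _ hi)

theorem exists_good_chain [LinearOrder P] [WellFoundedLT P] (hlam : ℵ₀ ≤ lam)
    (hsat : AtomSaturated (L := Language.order) (Order.succ lam) (RedPow D (PrefOrd X)))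
    (hV : #V ≤ lam) (hGood : ∀ v i ⦃l l'⦄, l' <+: l → Good v i l → Good v i l')
    (hroot : IsGood D Good fun _ => []) (hP : #P ≤ lam) (c : P → I → X)
    (hc : ∀ γ y, IsGood D Good y → IsGood D Good fun i => y i ++ [c γ i]) :
    ∃ A : P → I → List X, ∀ γ, IsGood D Good (A γ) ∧
      ∀ δ < γ, (fun i => A δ i ++ [c δ i]) <+:ᶠ[D] A γ := by
  classical
  let step (γ : P) (prev : ∀ δ < γ, I → List X) : I → List X :=
    if h : ∃ y, IsGood D Good y ∧ ∀ δ (hδ : δ < γ), (fun i => prev δ hδ i ++ [c δ i]) <+:ᶠ[D] y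
    then h.choose else fun _ => []
  let A := wellFounded_lt.fix step
  refine ⟨A, fun γ => ?_⟩
  induction γ using WellFoundedLT.induction with
  | _ γ ih =>
  have hstep : ∃ y, IsGood D Good y ∧ ∀ δ < γ, (fun i => A δ i ++ [c δ i]) <+:ᶠ[D] y := by
    obtain ⟨y, hy, hAy⟩ := exists_good_upper_bound hlam hsat hV hGood hroot
      ((mk_set_le (Set.Iio γ)).trans hP) (fun δ i => A δ i ++ [c δ i])
      (directed_append_singleton (A := fun δ : Set.Iio γ => A δ) fun δ δ' h => (ih δ δ.2).2 δ' h)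
      fun δ => hc _ _ (ih δ δ.2).1
    exact ⟨y, hy, fun δ hδ => hAy ⟨δ, hδ⟩⟩
  rw [show A γ = step γ fun δ _ => A δ from wellFounded_lt.fix_eq _ _]
  simp only [step, dif_pos hstep]
  exact hstep.choose_spec

theorem exists_good_branch (hlam : ℵ₀ ≤ lam)
    (hsat : AtomSaturated (L := Language.order) (Order.succ lam) (RedPow D (PrefOrd X)))
    (hV : #V ≤ lam) (hGood : ∀ v i ⦃l l'⦄, l' <+: l → Good v i l → Good v i l')
    (hroot : IsGood D Good fun _ => []) (hP : #P ≤ lam) (c : P → I → X)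
    (hc : ∀ γ y, IsGood D Good y → IsGood D Good fun i => y i ++ [c γ i]) :
    ∃ y, IsGood D Good y ∧ ∀ γ, ∀ᶠ i in D, c γ i ∈ y i := by
  obtain ⟨_, _⟩ := exists_wellFoundedLT P
  obtain ⟨A, hA⟩ := exists_good_chain hlam hsat hV hGood hroot hP c hc
  obtain ⟨y, hy, hAy⟩ := exists_good_upper_bound hlam hsat hV hGood hroot hP
    (fun γ i => A γ i ++ [c γ i]) (directed_append_singleton fun γ => (hA γ).2)
    fun γ => hc _ _ (hA γ).1
  exact ⟨y, hy, fun γ => (hAy γ).mono fun i h => h.subset (by simp)⟩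

end GoodBranch

section Saturation

open Cardinal

theorem mk_fmlInst_le {L : FirstOrder.Language.{u, u}} {N : Type u} [Infinite N] (ε : ℕ) :
    #(FmlInst L ε N) ≤ #N + L.card := by
  have hμ : ℵ₀ ≤ #N + L.card := (aleph0_le_mk N).trans (self_le_add_right _ _)
  have hφ (m : ℕ) : #(L.Formula (Fin ε ⊕ Fin m)) ≤ #N + L.card := by
    refine (mk_le_of_injective (sigma_mk_injective (i := 0))).trans
      (BoundedFormula.card_le.trans (max_le hμ ?_))
    rw [lift_uzero]
    exact add_le_add_left ((lift_le_aleph0.2 mk_le_aleph0).trans (aleph0_le_mk N)) _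
  have htuple (m : ℕ) : #(Fin m → N) ≤ #N + L.card := by
    rw [mk_arrow, lift_uzero, mk_fin, lift_natCast, power_natCast]
    exact (power_nat_le (aleph0_le_mk N)).trans (self_le_add_right _ _)
  calc #(FmlInst L ε N)
      = sum fun m => #(L.Formula (Fin ε ⊕ Fin m) × (Fin m → N)) := mk_sigma _
    _ ≤ sum fun _ : ℕ => #N + L.card := sum_le_sum _ _ fun m => by
      rw [mk_prod, lift_id, lift_id]
      exact (mul_le_mul' (hφ m) (htuple m)).trans (mul_eq_self hμ).le
    _ = #N + L.card := by rw [sum_const, mk_nat, lift_aleph0, lift_uzero, aleph0_mul_eq hμ]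

theorem tupSaturated_of_embedding {L : FirstOrder.Language.{u, u}} {I N X : Type u}
    [L.Structure N] [Nonempty N] (D : Ultrafilter I) {lam : Cardinal.{u}} (hlam : ℵ₀ ≤ lam)
    (hsat : AtomSaturated (L := Language.order) (Order.succ lam)
      (RedPow (D : Filter I) (PrefOrd X)))
    (e : FmlInst L 1 N ↪ X) :
    TupSaturated (Order.succ lam) 1 (Set.univ : Set (Σ m : ℕ, L.Formula (Fin 1 ⊕ Fin m)))
      (RedPow (D : Filter I) N) := by
  classical
  intro p _ hp hfin
  have hp : #p ≤ lam := Order.lt_succ_iff.1 hp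
  let ψ (γ : p) (i : I) : FmlInst L 1 N := RedProd.coordInst γ.1 i
  let Good (v : Finset p) (i : I) (l : List X) : Prop :=
    ∃ a : Fin 1 → N, (∀ q, e q ∈ l → RealizesInst a q) ∧ ∀ γ ∈ v, RealizesInst a (ψ γ i)
  have hV : #(Finset p) ≤ lam := (mk_le_of_surjective List.toFinset_surjective).trans
    ((mk_list_le_max _).trans (max_le hlam hp))
  have hGood : ∀ v i ⦃l l'⦄, l' <+: l → Good v i l → Good v i l' :=
    fun _ _ _ _ h ⟨a, hcodes, hv⟩ => ⟨a, fun q hq => hcodes q (h.subset hq), hv⟩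
  have hroot : IsGood (D : Filter I) Good fun _ => [] := by
    intro v
    obtain ⟨x, hx⟩ :=
      hfin (Subtype.val '' ↑v) (Subtype.coe_image_subset _ _) (v.finite_toSet.image _)
    have hcoord : ∀ γ ∈ v, ∀ᶠ i in (D : Filter I),
        RealizesInst (fun k => (x k).out i) (ψ γ i) :=
      fun γ hγ => (RedProd.realizesInst_mk_iff D (fun k => (x k).out) γ.1).1
        (by simpa only [RedProd.mk_out] using hx γ ⟨γ, hγ, rfl⟩)
    exact ((eventually_all_finset v).2 hcoord).mono fun i hi => ⟨_, by simp, hi⟩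
  have hc : ∀ γ y, IsGood (D : Filter I) Good y →
      IsGood (D : Filter I) Good fun i => y i ++ [e (ψ γ i)] := by
    intro γ y hy v
    refine (hy (insert γ v)).mono fun i ⟨a, hcodes, hv⟩ => ⟨a, fun q hq => ?_,
      fun δ hδ => hv δ (Finset.mem_insert_of_mem hδ)⟩
    rcases List.mem_append.1 hq with hq | hq
    · exact hcodes q hq
    · rw [e.injective (List.mem_singleton.1 hq)]
      exact hv γ (Finset.mem_insert_self _ _)
  obtain ⟨y, hy, hmem⟩ := exists_good_branch hlam hsat hV hGood hroot hp _ hc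
  obtain ⟨a, ha⟩ := (hy ∅).choice
  refine ⟨fun k => RedProd.mk (D : Filter I) fun i => a i k,
    fun q hq => (RedProd.realizesInst_mk_iff D _ q).2 ?_⟩
  filter_upwards [ha, hmem ⟨q, hq⟩] with i hai hqi
  exact hai.1 _ hqi

end Saturation

/-- If `D` is an ultrafilter on `I`, `N` a structure, `μ = ‖N‖ + |τ(N)|` and the
ultrapower `(^{ω>}μ, ⊴)^I/D` is `(λ⁺, atomically)`-saturated, then `N^I/D` is
`λ⁺`-saturated (for types of first-order formulas in one free variable). -/
theorem ultrapower_saturated_of_tree_saturated {L : FirstOrder.Language.{0, 0}} {I : Type}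
    (D : Ultrafilter I) (N : Type) [L.Structure N] (lam : Cardinal) (hlam : ℵ₀ ≤ lam)
    (hsat : AtomSaturated (L := FirstOrder.Language.order) (Order.succ lam)
      (RedPow (D : Filter I) (PrefOrd ((#N + L.card).ord.ToType)))) :
    TupSaturated (Order.succ lam) 1
      (Set.univ : Set (Σ m : ℕ, L.Formula (Fin 1 ⊕ Fin m))) (RedPow (D : Filter I) N) := by
  rcases finite_or_infinite N with hN | hN
  · have := RedPow.finite (N := N) D
    exact tupSaturated_of_finite _ _ _
  · obtain ⟨e⟩ : Nonempty (FmlInst L 1 N ↪ (#N + L.card).ord.ToType) := by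
      rw [← Cardinal.le_def, Cardinal.mk_ord_toType]
      exact mk_fmlInst_le 1
    exact tupSaturated_of_embedding D hlam hsat e

end Shelah1064
end

section
/- Let 𝔅 be a Boolean algebra and D a filter on 𝔅. Then every T_ord-(ℵ₀,ℵ₀)-moral problem in (𝔅,D) has a solution. -/
open FirstOrder Cardinal

namespace Shelah1064

/-- `Dset` is a filter on the lattice `B` (with top). -/
def IsBFilter {B : Type*} [Lattice B] [OrderTop B] (Dset : Set B) : Prop :=
  ⊤ ∈ Dset ∧ (∀ x ∈ Dset, ∀ y ∈ Dset, x ⊓ y ∈ Dset) ∧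
    ∀ x ∈ Dset, ∀ y : B, x ≤ y → y ∈ Dset

/-! ### `T_ord`-moral problems -/

/-- The linear order `I(κ₁,κ₂) = I₁ + I₂`: a copy of `κ₁` followed by a reversed copy
of `κ₂`. -/
abbrev IOrd (κ₁ κ₂ : Cardinal) : Type _ := κ₁.ord.ToType ⊕ₗ (κ₂.ord.ToType)ᵒᵈ

/-- `a` is a `T_ord`-`(κ₁,κ₂)`-moral problem in `(B, D)`; `a` is given on all pairs, with the
stipulations `a s s = ⊤` and symmetry built in. -/
def TordProblem {B : Type*} [BooleanAlgebra B] (Dset : Set B) (κ₁ κ₂ : Cardinal)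
    (a : IOrd κ₁ κ₂ → IOrd κ₁ κ₂ → B) : Prop :=
  (∀ s, a s s = ⊤) ∧ (∀ s t, a s t = a t s) ∧ (∀ s t, s < t → a s t ∈ Dset) ∧
  ∀ (u : Finset (IOrd κ₁ κ₂)) (tt : IOrd κ₁ κ₂ → IOrd κ₁ κ₂ → Bool),
    (u ×ˢ u).inf (fun q => if tt q.1 q.2 then a q.1 q.2 else (a q.1 q.2)ᶜ) ≠ ⊥ →
    ∃ f : IOrd κ₁ κ₂ → ℕ, (∀ s ∈ u, f s < u.card) ∧
      ∀ s ∈ u, ∀ t ∈ u, (tt s t = true ↔ f s ≤ f t)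

/-- `b` is a solution of the `T_ord`-moral problem `a` in `(B, D)`. -/
def TordSolution {B : Type*} [BooleanAlgebra B] (Dset : Set B) {κ₁ κ₂ : Cardinal}
    (a : IOrd κ₁ κ₂ → IOrd κ₁ κ₂ → B) (b : IOrd κ₁ κ₂ → B) : Prop :=
  (∀ s, b s ∈ Dset) ∧
  ∀ (i : κ₁.ord.ToType) (j : (κ₂.ord.ToType)ᵒᵈ),
    b (toLex (Sum.inl i)) ⊓ b (toLex (Sum.inr j)) ≤
      a (toLex (Sum.inl i)) (toLex (Sum.inr j))

/-!
Only the pairs `(i, j) ∈ I₁ × I₂` constrain a solution, and both sides are countable, so one can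
diagonalise: rank both sides injectively in `ℕ`, let `b i` be the meet of the `a i j` with `j` of
rank at most that of `i`, and symmetrically for `b j`. These are finite meets, hence in the filter,
and for each pair the side of larger rank already lies below `a i j`.
-/

theorem exists_inf_le_of_countable {B : Type*} [SemilatticeInf B] [OrderTop B] {D : Set B}
    (hTop : ⊤ ∈ D) (hInf : ∀ x ∈ D, ∀ y ∈ D, x ⊓ y ∈ D)
    {α β : Type*} [Countable α] [Countable β] (c : α → β → B) (hc : ∀ i j, c i j ∈ D) :
    ∃ (f : α → B) (g : β → B), (∀ i, f i ∈ D) ∧ (∀ j, g j ∈ D) ∧ ∀ i j, f i ⊓ g j ≤ c i j := by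
  obtain ⟨r₁, hr₁⟩ := exists_injective_nat α
  obtain ⟨r₂, hr₂⟩ := exists_injective_nat β
  let rankLE₁ (n : ℕ) : Finset α := (Finset.Iic n).preimage r₁ hr₁.injOn
  let rankLE₂ (n : ℕ) : Finset β := (Finset.Iic n).preimage r₂ hr₂.injOn
  refine ⟨fun i => (rankLE₂ (r₁ i)).inf (c i), fun j => (rankLE₁ (r₂ j)).inf (c · j),
    fun i => Finset.inf_mem D hTop hInf _ _ fun j _ => hc i j,
    fun j => Finset.inf_mem D hTop hInf _ _ fun i _ => hc i j, fun i j => ?_⟩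
  rcases le_total (r₂ j) (r₁ i) with h | h
  · exact inf_le_left.trans (Finset.inf_le (by simpa [rankLE₂] using h))
  · exact inf_le_right.trans (Finset.inf_le (by simpa [rankLE₁] using h))

theorem countable_toType_ord_aleph0 : Countable (ℵ₀ : Cardinal).ord.ToType :=
  mk_le_aleph0_iff.mp (mk_ord_toType _).le

/-- For any Boolean algebra `𝔅` and any filter `D` on `𝔅`, every
`T_ord`-`(ℵ₀,ℵ₀)`-moral problem in `(𝔅,D)` has a solution. -/
theorem tordProblem_aleph0_aleph0_solvable {B : Type*} [BooleanAlgebra B] (Dset : Set B)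
    (hD : IsBFilter Dset) (a : IOrd ℵ₀ ℵ₀ → IOrd ℵ₀ ℵ₀ → B)
    (ha : TordProblem Dset ℵ₀ ℵ₀ a) : ∃ b, TordSolution Dset a b := by
  obtain ⟨hTop, hInf, -⟩ := hD
  have hcross : ∀ i j, a (toLex (Sum.inl i)) (toLex (Sum.inr j)) ∈ Dset :=
    fun i j => ha.2.2.1 _ _ (Sum.Lex.inl_lt_inr _ _)
  have : Countable (ℵ₀ : Cardinal).ord.ToType := countable_toType_ord_aleph0
  have : Countable (ℵ₀ : Cardinal).ord.ToTypeᵒᵈ := countable_toType_ord_aleph0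
  obtain ⟨f, g, hf, hg, hfg⟩ := exists_inf_le_of_countable hTop hInf _ hcross
  refine ⟨fun s => Sum.elim f g (ofLex s), ?_, hfg⟩
  rintro (i | j)
  exacts [hf i, hg j]

end Shelah1064
end
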